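/- arXiv:1412.1563 — 11 statements merged into one kernel-verified Lean document; each statement's English description precedes it below -/
import Mathlib

section
/- Every zero-median solution x_1, …, x_N of the recursion has zero mean: x_1 + … + x_N = 0. -/
open Finset

/-- Partial sum `S_n = x_1 + ... + x_n`. -/
noncomputable def S (x : ℕ → ℝ) (n : ℕ) : ℝ := ∑ i ∈ Finset.Icc 1 n, x i

/-- `x_1, ..., x_N` is a solution of the recursion `x_{n+1} = x_n - 1/S_n`
with all relevant partial sums nonzero. -/
def IsSolution (N : ℕ) (x : ℕ → ℝ) : Prop :=
  ∀ n, 1 ≤ n → n ≤ N - 1 → S x n ≠ 0 ∧ x (n + 1) = x n - 1 / S x n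

/-- Zero-median property: the middle value is `0` when `N` is odd, and the two middle
values are negatives of each other when `N` is even. -/
def ZeroMedian (N : ℕ) (x : ℕ → ℝ) : Prop :=
  (Odd N → x ((N + 1) / 2) = 0) ∧ (Even N → x (N / 2) = - x (N / 2 + 1))

lemma S_succ' (x : ℕ → ℝ) (n : ℕ) : S x (n + 1) = S x n + x (n + 1) := by
  unfold S
  rw [Finset.sum_Icc_succ_top (by omega : 1 ≤ n + 1)]

lemma S_zero' (x : ℕ → ℝ) : S x 0 = 0 := by simp [S]

/-- Every zero-median solution of the recursion has zero mean. -/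
theorem zero_median_implies_zero_mean (N : ℕ) (hN : 3 ≤ N) (x : ℕ → ℝ)
    (hsol : IsSolution N x) (hmed : ZeroMedian N x) :
    ∑ i ∈ Finset.Icc 1 N, x i = 0 := by
  show S x N = 0
  rcases Nat.even_or_odd N with he | ho
  · -- even case, N = m + m
    obtain ⟨m, hm⟩ := he
    have hm2 : 2 ≤ m := by omega
    have hmid : x m = - x (m + 1) := by
      have := hmed.2 ⟨m, hm⟩
      have h2 : N / 2 = m := by omega
      rwa [h2] at this
    have key : ∀ k, 1 ≤ k → k ≤ m →
        x (m + k) = - x (m + 1 - k) ∧ S x (m + k) = S x (m - k) := by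
      intro k hk1
      induction k, hk1 using Nat.le_induction with
      | base =>
        intro _
        have e1 : m + 1 - 1 = m := by omega
        have e2 : m - 1 + 1 = m := by omega
        constructor
        · rw [e1]; linarith [hmid]
        · have h1 : S x (m + 1) = S x m + x (m + 1) := S_succ' x m
          have h2 : S x m = S x (m - 1) + x m := by
            have h := S_succ' x (m - 1); rwa [e2] at h
          rw [h1, h2, hmid]; ring
      | succ k hk ih =>
        intro hk'
        obtain ⟨ihx, ihS⟩ := ih (by omega)
        have hrec1 := hsol (m + k) (by omega) (by omega)
        have hrec2 := hsol (m - k) (by omega) (by omega)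
        have e1 : m - k + 1 = m + 1 - k := by omega
        have e2 : m - k - 1 + 1 = m - k := by omega
        have e3 : m + 1 - (k + 1) = m - k := by omega
        have hb : x (m + 1 - k) = x (m - k) - 1 / S x (m - k) := by
          rw [← e1]; exact hrec2.2
        have hx : x (m + (k + 1)) = - x (m - k) := by
          have := hrec1.2
          rw [show m + k + 1 = m + (k + 1) by ring] at this
          rw [this, ihx, ihS, hb]; ring
        constructor
        · rw [e3]; exact hx
        · have h1 : S x (m + (k + 1)) = S x (m + k) + x (m + (k + 1)) := by
            rw [show m + (k + 1) = (m + k) + 1 by ring]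
            exact S_succ' x (m + k)
          have h2 : S x (m - k) = S x (m - k - 1) + x (m - k) := by
            have h := S_succ' x (m - k - 1); rwa [e2] at h
          rw [show m - (k + 1) = m - k - 1 by omega, h1, hx, ihS, h2]; ring
    have := (key m (by omega) le_rfl).2
    rw [← hm] at this
    simp only [Nat.sub_self, S_zero'] at this
    exact this
  · -- odd case, N = 2 * t + 1
    obtain ⟨t, ht⟩ := ho
    have ht1 : 1 ≤ t := by omega
    have hmid : x (t + 1) = 0 := by
      have := hmed.1 ⟨t, ht⟩
      have h2 : (N + 1) / 2 = t + 1 := by omega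
      rwa [h2] at this
    have key : ∀ k, k ≤ t →
        x (t + 1 + k) = - x (t + 1 - k) ∧ S x (t + 1 + k) = S x (t - k) := by
      intro k
      induction k with
      | zero =>
        intro _
        constructor
        · simp [hmid]
        · simp only [Nat.add_zero, Nat.sub_zero]
          rw [S_succ' x t, hmid]; ring
      | succ k ih =>
        intro hk'
        obtain ⟨ihx, ihS⟩ := ih (by omega)
        have hrec1 := hsol (t + 1 + k) (by omega) (by omega)
        have hrec2 := hsol (t - k) (by omega) (by omega)
        have e1 : t - k + 1 = t + 1 - k := by omega
        have e2 : t - k - 1 + 1 = t - k := by omega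
        have e3 : t + 1 - (k + 1) = t - k := by omega
        have hb : x (t + 1 - k) = x (t - k) - 1 / S x (t - k) := by
          rw [← e1]; exact hrec2.2
        have hx : x (t + 1 + (k + 1)) = - x (t - k) := by
          have := hrec1.2
          rw [show t + 1 + k + 1 = t + 1 + (k + 1) by ring] at this
          rw [this, ihx, ihS, hb]; ring
        constructor
        · rw [e3]; exact hx
        · have h1 : S x (t + 1 + (k + 1)) = S x (t + 1 + k) + x (t + 1 + (k + 1)) := by
            rw [show t + 1 + (k + 1) = (t + 1 + k) + 1 by ring]
            exact S_succ' x (t + 1 + k)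
          have h2 : S x (t - k) = S x (t - k - 1) + x (t - k) := by
            have h := S_succ' x (t - k - 1); rwa [e2] at h
          rw [show t - (k + 1) = t - k - 1 by omega, h1, hx, ihS, h2]; ring
    have := (key t le_rfl).2
    rw [show t + 1 + t = N by omega] at this
    simpa [S_zero'] using this
end

section
/- Every zero-median solution x_1, …, x_N of the recursion satisfies the variance identity x_1² + x_2² + … + x_N² = N − 1. -/
open Finset

lemma telescope (N : ℕ) (x : ℕ → ℝ) (hsol : IsSolution N x) :
    ∀ n, 1 ≤ n → n ≤ N → ∑ i ∈ Finset.Icc 1 n, (x i) ^ 2 = S x n * x n + ((n : ℝ) - 1) := by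
  intro n
  induction n with
  | zero => omega
  | succ k ih =>
    intro h1 h2
    rcases Nat.lt_or_ge k 1 with hk | hk1
    · interval_cases k
      simp [S]
      ring
    · have hkN : k ≤ N - 1 := by omega
      obtain ⟨hS, hx⟩ := hsol k hk1 hkN
      have hsum := ih hk1 (by omega)
      rw [Finset.sum_Icc_succ_top (by omega : 1 ≤ k + 1), hsum, S_succ']
      have key : S x k * x (k + 1) = S x k * x k - 1 := by
        rw [hx]; field_simp
      push_cast
      linear_combination -key

lemma odd_SN_zero (N m : ℕ) (x : ℕ → ℝ) (hsol : IsSolution N x)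
    (hm : 2 ≤ m) (hNm : N = 2 * m - 1) (hxm : x m = 0) : S x N = 0 := by
  have claim : ∀ k, k ≤ m - 1 → x (m + k) = - x (m - k) ∧ S x (m + k) = S x (m - k - 1) := by
    intro k
    induction k with
    | zero =>
      intro _
      constructor
      · simp [hxm]
      · have e : m - 1 + 1 = m := by omega
        have := S_succ' x (m - 1)
        rw [e] at this
        simp [this, hxm]
    | succ k ih =>
      intro hk
      obtain ⟨ihx, ihS⟩ := ih (by omega)
      -- recursion at n = m + k
      obtain ⟨_, hx1⟩ := hsol (m + k) (by omega) (by omega)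
      -- recursion at n = m - k - 1
      obtain ⟨_, hx2⟩ := hsol (m - k - 1) (by omega) (by omega)
      have e : m - k - 1 + 1 = m - k := by omega
      rw [e] at hx2
      have e2 : m - (k + 1) = m - k - 1 := by omega
      have hx' : x (m + (k + 1)) = - x (m - (k + 1)) := by
        have : m + (k + 1) = (m + k) + 1 := by ring
        rw [this, hx1, ihx, ihS, e2, hx2]
        ring
      refine ⟨hx', ?_⟩
      have : m + (k + 1) = (m + k) + 1 := by ring
      rw [this, S_succ', ← this, hx', ihS, e2]
      have h5 := S_succ' x (m - (k + 1) - 1)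
      have e5 : m - (k + 1) - 1 + 1 = m - k - 1 := by omega
      have e6 : m - (k + 1) - 1 = m - k - 1 - 1 := by omega
      rw [e5, e6] at h5
      linarith [h5]
  have hNe : N = m + (m - 1) := by omega
  obtain ⟨_, hS⟩ := claim (m - 1) le_rfl
  rw [hNe, hS]
  have : m - (m - 1) - 1 = 0 := by omega
  rw [this, S_zero']

lemma even_SN_zero (N m : ℕ) (x : ℕ → ℝ) (hsol : IsSolution N x)
    (hm : 2 ≤ m) (hNm : N = 2 * m) (hxm : x m = - x (m + 1)) : S x N = 0 := by
  have claim : ∀ k, 1 ≤ k → k ≤ m → x (m + k) = - x (m + 1 - k) ∧ S x (m + k) = S x (m - k) := by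
    intro k
    induction k with
    | zero => omega
    | succ k ih =>
      intro _ hk
      rcases Nat.lt_or_ge k 1 with hk0 | hk1
      · interval_cases k
        have e0 : m + 1 - 1 = m := by omega
        refine ⟨by rw [e0]; linarith [hxm], ?_⟩
        have e : m - 1 + 1 = m := by omega
        have h1 := S_succ' x m
        have h2 := S_succ' x (m - 1)
        rw [e] at h2
        have : m + 1 - 1 = m := by omega
        rw [h1, h2]
        have exm : x (m + 1) = - x m := by rw [hxm]; ring
        simp [exm]
      · obtain ⟨ihx, ihS⟩ := ih hk1 (by omega)
        obtain ⟨_, hx1⟩ := hsol (m + k) (by omega) (by omega)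
        obtain ⟨_, hx2⟩ := hsol (m - k) (by omega) (by omega)
        have e : m - k + 1 = m + 1 - k := by omega
        rw [e] at hx2
        have e2 : m + 1 - (k + 1) = m - k := by omega
        have hx' : x (m + (k + 1)) = - x (m + 1 - (k + 1)) := by
          have : m + (k + 1) = (m + k) + 1 := by ring
          rw [this, hx1, ihx, ihS, e2, hx2]
          ring
        refine ⟨hx', ?_⟩
        have : m + (k + 1) = (m + k) + 1 := by ring
        rw [this, S_succ', ← this, hx', ihS, e2]
        have h5 := S_succ' x (m - (k + 1))
        have e5 : m - (k + 1) + 1 = m - k := by omega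
        rw [e5] at h5
        linarith [h5]
  obtain ⟨_, hS⟩ := claim m (by omega) le_rfl
  have : N = m + m := by omega
  rw [this, hS]
  simp [S_zero']

/-- Every zero-median solution of the recursion satisfies the variance identity
`x_1^2 + ... + x_N^2 = N - 1`. -/
theorem zero_median_variance_identity (N : ℕ) (hN : 3 ≤ N) (x : ℕ → ℝ)
    (hsol : IsSolution N x) (hmed : ZeroMedian N x) :
    ∑ i ∈ Finset.Icc 1 N, (x i) ^ 2 = (N : ℝ) - 1 := by
  have htel := telescope N x hsol N (by omega) le_rfl
  have hSN : S x N = 0 := by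
    rcases Nat.even_or_odd N with he | ho
    · obtain ⟨m, hm⟩ := he
      have hm2 : 2 ≤ m := by omega
      have hmed' := hmed.2 ⟨m, hm⟩
      have hNd : N / 2 = m := by omega
      rw [hNd] at hmed'
      exact even_SN_zero N m x hsol hm2 (by omega) hmed'
    · obtain ⟨m, hm⟩ := ho
      have hm2 : 2 ≤ m + 1 := by omega
      have hmed' := hmed.1 ⟨m, hm⟩
      have hNd : (N + 1) / 2 = m + 1 := by omega
      rw [hNd] at hmed'
      exact odd_SN_zero N (m + 1) x hsol hm2 (by omega) hmed'
  rw [htel, hSN]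
  ring
end

section
/- Every zero-median solution x_1, …, x_N of the recursion is antisymmetric: x_n = −x_{N+1−n} for all n = 1, …, N. -/
/-!
Pair `x_j` with `x_{N+1-j}` and grow the antisymmetric window `a < j ≤ N - a` outward from the
median, where the zero-median hypothesis provides it. On such a window the terms cancel in pairs,
so `S_a = S_{N-a}`; the recursion then gives `x_{a+1} - x_a = x_{N-a+1} - x_{N-a}`, and since
`x_{N-a} = -x_{a+1}` this is `x_{N+1-a} = -x_a`: the window grows by one on each side.
-/

open Finset

theorem sum_Ioc_eq_zero_of_antisymm {G : Type*} [AddCommGroup G] [IsAddTorsionFree G]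
    {f : ℕ → G} {a b : ℕ} (hf : ∀ j ∈ Ioc a b, f j = -f (a + b + 1 - j)) :
    ∑ j ∈ Ioc a b, f j = 0 := by
  refine sum_involution (fun j _ => a + b + 1 - j) (fun j hj => by rw [hf j hj, neg_add_cancel])
    (fun j hj hne hfix => hne ?_) (fun j hj => ?_) (fun j hj => ?_)
  · have hj' := hf j hj
    rwa [hfix, self_eq_neg] at hj'
  all_goals simp only [mem_Ioc] at hj ⊢; omega

theorem S_sub_S_eq_sum_Ioc (x : ℕ → ℝ) {a b : ℕ} (hab : a ≤ b) :
    S x b - S x a = ∑ j ∈ Ioc a b, x j := by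
  have hS : ∀ n, S x n = ∑ j ∈ Ioc 0 n, x j := fun n => by rw [S, ← Icc_add_one_left_eq_Ioc]; rfl
  rw [hS, hS, ← sum_Ioc_consecutive x (Nat.zero_le a) hab, add_sub_cancel_left]

variable {N : ℕ} {x : ℕ → ℝ}

theorem IsSolution.sub_eq_of_S_eq (hsol : IsSolution N x) {a b : ℕ} (ha : a ∈ Icc 1 (N - 1))
    (hb : b ∈ Icc 1 (N - 1)) (hS : S x a = S x b) : x (a + 1) - x a = x (b + 1) - x b := by
  rw [mem_Icc] at ha hb
  rw [(hsol a ha.1 ha.2).2, (hsol b hb.1 hb.2).2, hS]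
  ring

theorem IsSolution.antisymm_extend (hsol : IsSolution N x) {a : ℕ} (hlt : a + 1 < N - (a + 1))
    (h : ∀ j ∈ Ioc (a + 1) (N - (a + 1)), x j = -x (N + 1 - j)) :
    ∀ j ∈ Ioc a (N - a), x j = -x (N + 1 - j) := by
  set b := N - (a + 1)
  have hsum : ∑ j ∈ Ioc (a + 1) b, x j = 0 :=
    sum_Ioc_eq_zero_of_antisymm fun j hj => by rw [h j hj]; congr 2; omega
  have hS : S x (a + 1) = S x b := (sub_eq_zero.1 ((S_sub_S_eq_sum_Ioc x hlt.le).trans hsum)).symm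
  have hstep : x (a + 1 + 1) - x (a + 1) = x (b + 1) - x b :=
    hsol.sub_eq_of_S_eq (by simp only [mem_Icc]; omega) (by simp only [mem_Icc]; omega) hS
  have hxb : x b = -x (a + 1 + 1) := by
    rw [h b (by simp only [mem_Ioc]; omega)]; congr 2; omega
  have hend : x (b + 1) = -x (a + 1) := by linarith
  intro j hj
  simp only [mem_Ioc] at hj
  by_cases hja : j = a + 1
  · rw [hja, show N + 1 - (a + 1) = b + 1 by omega, hend, neg_neg]
  by_cases hjb : j = b + 1
  · rw [hjb, show N + 1 - (b + 1) = a + 1 by omega, hend]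
  exact h j (by simp only [mem_Ioc]; omega)

theorem IsSolution.antisymm_of_window (hsol : IsSolution N x) {a : ℕ} (ha : a < N - a)
    (h : ∀ j ∈ Ioc a (N - a), x j = -x (N + 1 - j)) :
    ∀ j ∈ Ioc 0 N, x j = -x (N + 1 - j) := by
  induction a with
  | zero => simpa using h
  | succ a ih => exact ih (by omega) (hsol.antisymm_extend ha h)

theorem ZeroMedian.antisymm_middle (hmed : ZeroMedian N x) :
    ∀ j ∈ Ioc ((N - 1) / 2) (N - (N - 1) / 2), x j = -x (N + 1 - j) := by
  intro j hj
  simp only [mem_Ioc] at hj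
  rcases Nat.even_or_odd N with ⟨m, rfl⟩ | ⟨m, rfl⟩
  · have hmid : x m = -x (m + 1) := by
      simpa [show (m + m) / 2 = m by omega] using hmed.2 ⟨m, rfl⟩
    rcases (by omega : j = m ∨ j = m + 1) with hj | hj
    · rw [hj, show m + m + 1 - m = m + 1 by omega, hmid]
    · rw [hj, show m + m + 1 - (m + 1) = m by omega, hmid, neg_neg]
  · have hmid : x (m + 1) = 0 := by
      simpa [show (2 * m + 1 + 1) / 2 = m + 1 by omega] using hmed.1 ⟨m, rfl⟩
    rw [show j = m + 1 by omega, show 2 * m + 1 + 1 - (m + 1) = m + 1 by omega, hmid, neg_zero]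

/-- Every zero-median solution of the recursion is antisymmetric:
`x_n = - x_{N+1-n}` for `n = 1, ..., N`. -/
theorem zero_median_antisymmetric (N : ℕ) (hN : 3 ≤ N) (x : ℕ → ℝ)
    (hsol : IsSolution N x) (hmed : ZeroMedian N x) :
    ∀ n, 1 ≤ n → n ≤ N → x n = - x (N + 1 - n) := fun n h1 hnN =>
  hsol.antisymm_of_window (by omega) hmed.antisymm_middle n (mem_Ioc.2 ⟨h1, hnN⟩)
end

section
/- For every N ≥ 3 there exists exactly one solution x_1, …, x_N of the recursion that is strictly decreasing (x_1 > x_2 > … > x_N) and has zero mean (x_1 + … + x_N = 0); moreover this solution is zero-median. -/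
open Finset

namespace RecAux

noncomputable def P (s : ℝ) : ℕ → ℝ × ℝ
  | 0 => (s, s)
  | n+1 => ((P s n).1 - 1/(P s n).2, (P s n).2 + ((P s n).1 - 1/(P s n).2))

noncomputable def X (s : ℝ) (n : ℕ) : ℝ := (P s (n-1)).1
noncomputable def T (s : ℝ) (n : ℕ) : ℝ := (P s (n-1)).2

lemma X1 (s : ℝ) : X s 1 = s := rfl
lemma T1 (s : ℝ) : T s 1 = s := rfl

lemma Xstep (s : ℝ) (n : ℕ) (hn : 1 ≤ n) : X s (n+1) = X s n - 1 / T s n := by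
  obtain ⟨m, rfl⟩ : ∃ m, n = m + 1 := ⟨n - 1, by omega⟩
  simp [X, T, P]

lemma Tstep (s : ℝ) (n : ℕ) (hn : 1 ≤ n) : T s (n+1) = T s n + X s (n+1) := by
  obtain ⟨m, rfl⟩ : ∃ m, n = m + 1 := ⟨n - 1, by omega⟩
  simp [X, T, P]

lemma S_succ (x : ℕ → ℝ) (n : ℕ) : S x (n+1) = S x n + x (n+1) :=
  Finset.sum_Icc_succ_top (by omega) x

lemma S_one (x : ℕ → ℝ) : S x 1 = x 1 := by simp [S]

lemma S_zero (x : ℕ → ℝ) : S x 0 = 0 := by simp [S]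

lemma S_X (s : ℝ) : ∀ n, 1 ≤ n → S (X s) n = T s n := by
  intro n hn
  induction n, hn using Nat.le_induction with
  | base => rw [S_one, X1, T1]
  | succ n hn ih => rw [S_succ, ih, Tstep s n hn]

lemma agree (N : ℕ) (y : ℕ → ℝ) (hy : IsSolution N y) :
    ∀ n, 1 ≤ n → n ≤ N → y n = X (y 1) n ∧ S y n = T (y 1) n := by
  intro n hn
  induction n, hn using Nat.le_induction with
  | base => exact fun _ => ⟨(X1 _).symm, by rw [S_one, T1]⟩
  | succ n hn ih =>
    intro hN
    obtain ⟨hS, hrec⟩ := hy n hn (by omega)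
    obtain ⟨ih1, ih2⟩ := ih (by omega)
    refine ⟨?_, ?_⟩
    · rw [hrec, ih1, ih2, Xstep _ _ hn]
    · rw [S_succ, Tstep _ _ hn, ih2, hrec, ih1, ih2, Xstep _ _ hn]

lemma cont : ∀ n, 1 ≤ n → ∀ s₀ : ℝ, (∀ j, 1 ≤ j → j < n → T s₀ j ≠ 0) →
    ContinuousAt (fun s => X s n) s₀ ∧ ContinuousAt (fun s => T s n) s₀ := by
  intro n hn
  induction n, hn using Nat.le_induction with
  | base => exact fun s₀ _ => ⟨continuousAt_id, continuousAt_id⟩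
  | succ n hn ih =>
    intro s₀ h
    obtain ⟨ihX, ihT⟩ := ih s₀ (fun j h1 h2 => h j h1 (by omega))
    have hTn : T s₀ n ≠ 0 := h n hn (by omega)
    have hX : ContinuousAt (fun s => X s (n+1)) s₀ := by
      have e : (fun s => X s (n+1)) = fun s => X s n - 1 / T s n :=
        funext fun s => Xstep s n hn
      rw [e]
      exact ihX.sub (continuousAt_const.div ihT hTn)
    refine ⟨hX, ?_⟩
    have e : (fun s => T s (n+1)) = fun s => T s n + X s (n+1) :=
      funext fun s => Tstep s n hn
    rw [e]
    exact ihT.add hX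

lemma mono : ∀ n, 1 ≤ n → ∀ s t : ℝ, s < t → (∀ j, 1 ≤ j → j < n → 0 < T s j) →
    X s n < X t n ∧ T s n < T t n := by
  intro n hn
  induction n, hn using Nat.le_induction with
  | base => intro s t hst _; rw [X1, X1, T1, T1]; exact ⟨hst, hst⟩
  | succ n hn ih =>
    intro s t hst h
    obtain ⟨ihX, ihT⟩ := ih s t hst (fun j h1 h2 => h j h1 (by omega))
    have hTs : 0 < T s n := h n hn (by omega)
    have hdiv : 1 / T t n < 1 / T s n := one_div_lt_one_div_of_lt hTs ihT
    constructor
    · rw [Xstep s n hn, Xstep t n hn]; linarith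
    · rw [Tstep s n hn, Tstep t n hn, Xstep s n hn, Xstep t n hn]; linarith

lemma large (N : ℕ) (hN : 3 ≤ N) (s : ℝ) (hs : (N:ℝ) ≤ s) :
    ∀ n, 1 ≤ n → n ≤ N → s - n + 1 ≤ X s n ∧ s ≤ T s n := by
  have h3 : (3:ℝ) ≤ (N:ℝ) := by exact_mod_cast hN
  intro n hn
  induction n, hn using Nat.le_induction with
  | base => intro _; rw [X1, T1]; push_cast; constructor <;> linarith
  | succ n hn ih =>
    intro hnN
    obtain ⟨ih1, ih2⟩ := ih (by omega)
    have hNn : (n:ℝ) + 1 ≤ (N:ℝ) := by exact_mod_cast hnN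
    have hT1 : (1:ℝ) ≤ T s n := by linarith
    have hTpos : (0:ℝ) < T s n := by linarith
    have hinv : 1 / T s n ≤ 1 := by rw [div_le_one hTpos]; linarith
    have hinvpos : 0 < 1 / T s n := by positivity
    have hX : s - ((n:ℝ)+1) + 1 ≤ X s (n+1) := by rw [Xstep s n hn]; linarith
    constructor
    · push_cast; exact hX
    · rw [Tstep s n hn]; linarith

end RecAux

open RecAux

/-- For every `N ≥ 3` there is exactly one strictly decreasing zero-mean solution of the
recursion (uniqueness meaning agreement on the coordinates `1, ..., N`), and this solution
is zero-median. -/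
theorem exists_unique_decreasing_zero_mean_solution (N : ℕ) (hN : 3 ≤ N) :
    ∃ x : ℕ → ℝ,
      (IsSolution N x ∧ (∀ n, 1 ≤ n → n < N → x (n + 1) < x n) ∧
        ∑ i ∈ Finset.Icc 1 N, x i = 0) ∧
      ZeroMedian N x ∧
      ∀ y : ℕ → ℝ,
        (IsSolution N y ∧ (∀ n, 1 ≤ n → n < N → y (n + 1) < y n) ∧
          ∑ i ∈ Finset.Icc 1 N, y i = 0) →
        ∀ n, 1 ≤ n → n ≤ N → y n = x n := by
  classical
  have hupD : ∀ s t : ℝ, s < t → (∀ j, 1 ≤ j → j < N → 0 < T s j) →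
      (∀ j, 1 ≤ j → j < N → 0 < T t j) := by
    intro s t hst hs j h1 h2
    have h := mono j h1 s t hst (fun i hi1 hi2 => hs i hi1 (by omega))
    exact (hs j h1 h2).trans h.2
  set D : Set ℝ := {s | ∀ j, 1 ≤ j → j < N → 0 < T s j} with hDdef
  have hN3 : (3:ℝ) ≤ (N:ℝ) := by exact_mod_cast hN
  have hND : (N:ℝ) ∈ D := by
    intro j h1 h2
    have h := (large N hN (N:ℝ) le_rfl j h1 (by omega)).2
    linarith
  have hDne : D.Nonempty := ⟨_, hND⟩
  have hDbdd : BddBelow D := by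
    refine ⟨0, fun s hs => ?_⟩
    have h := hs 1 le_rfl (by omega)
    rw [T1] at h; linarith
  have hDnhds : ∀ s₀ ∈ D, D ∈ nhds s₀ := by
    intro s₀ hs₀
    have hj : ∀ j ∈ Finset.Ico 1 N, ∀ᶠ s in nhds s₀, 0 < T s j := by
      intro j hjm
      obtain ⟨h1, h2⟩ := Finset.mem_Ico.mp hjm
      have hc := (cont j h1 s₀ (fun i hi1 hi2 => (hs₀ i hi1 (by omega)).ne')).2
      exact hc (Ioi_mem_nhds (hs₀ j h1 h2))
    have hall := (Filter.eventually_all_finset (Finset.Ico 1 N)).mpr hj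
    filter_upwards [hall] with s hs j hj1 hj2
    exact hs j (Finset.mem_Ico.mpr ⟨hj1, hj2⟩)
  set σ := sInf D with hσdef
  have hσnot : σ ∉ D := by
    intro h
    obtain ⟨ε, hε, hball⟩ := Metric.mem_nhds_iff.mp (hDnhds σ h)
    have hmem : σ - ε/2 ∈ D := hball (by
      rw [Metric.mem_ball, Real.dist_eq, abs_of_nonpos (by linarith)]; linarith)
    have h2 := csInf_le hDbdd hmem
    linarith
  have hσlt : ∀ s ∈ D, σ < s := fun s hs =>
    lt_of_le_of_ne (csInf_le hDbdd hs) (fun h => hσnot (h ▸ hs))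
  have hDmem : ∀ t : ℝ, σ < t → t ∈ D := by
    intro t ht
    obtain ⟨s, hsD, hst⟩ := (csInf_lt_iff hDbdd hDne).mp ht
    exact hupD s t hst hsD
  -- minimal bad index at σ
  have hbadex : ∃ j, 1 ≤ j ∧ j < N ∧ T σ j ≤ 0 := by
    by_contra hcon
    push_neg at hcon
    exact hσnot (fun j h1 h2 => hcon j h1 h2)
  obtain ⟨m, ⟨hm1, hmN, hmle⟩, hmmin'⟩ :
      ∃ m, (1 ≤ m ∧ m < N ∧ T σ m ≤ 0) ∧ ∀ j < m, ¬(1 ≤ j ∧ j < N ∧ T σ j ≤ 0) :=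
    ⟨Nat.find hbadex, Nat.find_spec hbadex, fun j hj => Nat.find_min hbadex hj⟩
  have hmmin : ∀ j, 1 ≤ j → j < m → 0 < T σ j := by
    intro j h1 h2
    have h := hmmin' j h2
    push_neg at h
    exact h h1 (by omega)
  have hcXm := cont m hm1 σ (fun j h1 h2 => (hmmin j h1 h2).ne')
  have hTσm : T σ m = 0 := by
    rcases lt_or_eq_of_le hmle with hlt | heq
    · exfalso
      have hev : ∀ᶠ s in nhds σ, T s m < 0 := hcXm.2 (Iio_mem_nhds hlt)
      obtain ⟨ε, hε, hball⟩ := Metric.eventually_nhds_iff_ball.mp hev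
      have hsD : σ + ε/2 ∈ D := hDmem _ (by linarith)
      have h1 : T (σ + ε/2) m < 0 := hball _ (by
        rw [Metric.mem_ball, Real.dist_eq, abs_of_nonneg (by linarith)]; linarith)
      have h2 : 0 < T (σ + ε/2) m := hsD m hm1 hmN
      linarith
    · exact heq
  set c := X σ m with hcdef
  set ε₀ := min 1 (1 / (|c| + 3)) with hε₀def
  have habs3 : (0:ℝ) < |c| + 3 := by positivity
  have hε₀pos : 0 < ε₀ := lt_min one_pos (by positivity)
  have hε₀le1 : ε₀ ≤ 1 := min_le_left _ _
  have hε₀inv : |c| + 3 ≤ 1 / ε₀ := by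
    rw [le_div_iff₀ hε₀pos]
    have h := mul_le_mul_of_nonneg_left (min_le_right 1 (1 / (|c| + 3))) habs3.le
    rw [mul_one_div, div_self habs3.ne'] at h
    exact h
  have hev1 : ∀ᶠ s in nhds σ, X s m < c + 1 := hcXm.1 (Iio_mem_nhds (lt_add_one c))
  have hev2 : ∀ᶠ s in nhds σ, T s m < ε₀ := hcXm.2 (Iio_mem_nhds (show T σ m < ε₀ by rw [hTσm]; exact hε₀pos))
  obtain ⟨δ, hδ, hball⟩ := Metric.eventually_nhds_iff_ball.mp (hev1.and hev2)
  have hdrop : ∀ s : ℝ, σ < s → s < σ + δ → T s (m+1) < 0 := by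
    intro s hs1 hs2
    obtain ⟨hb1, hb2⟩ := hball s (by
      rw [Metric.mem_ball, Real.dist_eq, abs_of_nonneg (by linarith)]; linarith)
    have hsD : s ∈ D := hDmem s hs1
    have hTpos : 0 < T s m := hsD m hm1 hmN
    have hinv : 1 / ε₀ < 1 / T s m := one_div_lt_one_div_of_lt hTpos hb2
    have habs : c ≤ |c| := le_abs_self c
    rw [Tstep s m hm1, Xstep s m hm1]
    linarith
  have hmN1 : m + 1 = N := by
    by_contra hne
    have hmN' : m + 1 < N := by omega
    have hsD : σ + δ/2 ∈ D := hDmem _ (by linarith)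
    have h1 := hsD (m+1) (by omega) hmN'
    have h2 := hdrop (σ + δ/2) (by linarith) (by linarith)
    linarith
  rw [hmN1] at hdrop
  -- the set Z and its infimum τ
  set Z : Set ℝ := {s | s ∈ D ∧ 0 < T s N} with hZdef
  have hNZ : (N:ℝ) ∈ Z := by
    refine ⟨hND, ?_⟩
    have h := (large N hN (N:ℝ) le_rfl N (by omega) le_rfl).2
    linarith
  have hZne : Z.Nonempty := ⟨_, hNZ⟩
  have hZlb : ∀ z ∈ Z, σ + δ ≤ z := by
    intro z hz
    by_contra h
    push_neg at h
    have hσz := hσlt z hz.1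
    have := hdrop z hσz h
    linarith [hz.2]
  have hZbdd : BddBelow Z := ⟨σ + δ, hZlb⟩
  set τ := sInf Z with hτdef
  have hτge : σ + δ ≤ τ := le_csInf hZne hZlb
  have hτD : τ ∈ D := hDmem τ (by linarith)
  have hcN := cont N (by omega) τ (fun j h1 h2 => (hτD j h1 h2).ne')
  have hZnhds : ∀ s₀ ∈ Z, Z ∈ nhds s₀ := by
    intro s₀ hs₀
    have h1 := hDnhds s₀ hs₀.1
    have hc := (cont N (by omega) s₀ (fun j hj1 hj2 => (hs₀.1 j hj1 hj2).ne')).2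
    have h2 := hc (Ioi_mem_nhds hs₀.2)
    filter_upwards [h1, h2] with s hsD hsN
    exact ⟨hsD, hsN⟩
  have hτnot : τ ∉ Z := by
    intro h
    obtain ⟨ε, hε, hball'⟩ := Metric.mem_nhds_iff.mp (hZnhds τ h)
    have hmem : τ - ε/2 ∈ Z := hball' (by
      rw [Metric.mem_ball, Real.dist_eq, abs_of_nonpos (by linarith)]; linarith)
    have h2 := csInf_le hZbdd hmem
    linarith
  have hτle : T τ N ≤ 0 := by
    by_contra h
    push_neg at h
    exact hτnot ⟨hτD, h⟩
  have hτN : T τ N = 0 := by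
    rcases lt_or_eq_of_le hτle with hlt | heq
    · exfalso
      have hev : ∀ᶠ s in nhds τ, T s N < 0 := hcN.2 (Iio_mem_nhds hlt)
      obtain ⟨ε, hε, hb⟩ := Metric.eventually_nhds_iff_ball.mp hev
      obtain ⟨z, hzZ, hz⟩ := (csInf_lt_iff hZbdd hZne).mp (show sInf Z < τ + ε by linarith)
      have hτz : τ ≤ z := csInf_le hZbdd hzZ
      have hneg := hb z (by
        rw [Metric.mem_ball, Real.dist_eq, abs_of_nonneg (by linarith)]; linarith)
      linarith [hzZ.2]
    · exact heq
  -- the solution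
  have hXN0 : S (X τ) N = 0 := by rw [S_X τ N (by omega), hτN]
  have hsol : IsSolution N (X τ) := by
    intro n h1 h2
    have h2' : n < N := by omega
    have hpos : 0 < T τ n := hτD n h1 h2'
    refine ⟨by rw [S_X τ n h1]; exact hpos.ne', ?_⟩
    rw [S_X τ n h1]
    exact Xstep τ n h1
  have hdec : ∀ n, 1 ≤ n → n < N → X τ (n+1) < X τ n := by
    intro n h1 h2
    have hpos := hτD n h1 h2
    rw [Xstep τ n h1]
    have : 0 < 1 / T τ n := by positivity
    linarith
  have hsum : ∑ i ∈ Finset.Icc 1 N, X τ i = 0 := hXN0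
  have huniq : ∀ y : ℕ → ℝ,
      (IsSolution N y ∧ (∀ n, 1 ≤ n → n < N → y (n + 1) < y n) ∧
        ∑ i ∈ Finset.Icc 1 N, y i = 0) →
      ∀ n, 1 ≤ n → n ≤ N → y n = X τ n := by
    rintro y ⟨hy, hydec, hysum⟩
    have hag := agree N y hy
    have hs'D : y 1 ∈ D := by
      intro j h1 h2
      have hSpos : 0 < S y j := by
        obtain ⟨hne, hrec⟩ := hy j h1 (by omega)
        have hd := hydec j h1 h2
        rw [hrec] at hd
        have hd' : 0 < 1 / S y j := by linarith
        exact (one_div_pos).mp hd'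
      have he := (hag j h1 (by omega)).2
      rw [← he]
      exact hSpos
    have hs'N : T (y 1) N = 0 := by
      have he := (hag N (by omega) le_rfl).2
      rw [← he]
      exact hysum
    have hs'τ : y 1 = τ := by
      rcases lt_trichotomy (y 1) τ with h | h | h
      · have hm := (mono N (by omega) (y 1) τ h (fun j h1 h2 => hs'D j h1 h2)).2
        rw [hs'N, hτN] at hm
        exact absurd hm (lt_irrefl 0)
      · exact h
      · have hm := (mono N (by omega) τ (y 1) h (fun j h1 h2 => hτD j h1 h2)).2
        rw [hs'N, hτN] at hm
        exact absurd hm (lt_irrefl 0)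
    intro n h1 h2
    rw [(hag n h1 h2).1, hs'τ]
  -- reflection symmetry: x_n = -x_{N+1-n}
  have hrefl : ∀ n, 1 ≤ n → n ≤ N → -X τ (N+1-n) = X τ n := by
    set y : ℕ → ℝ := fun n => -X τ (N+1-n) with hydef
    have hSyn : ∀ n, 1 ≤ n → n ≤ N → S y n = S (X τ) (N-n) - S (X τ) N := by
      intro n hn
      induction n, hn using Nat.le_induction with
      | base =>
        intro _
        rw [S_one]
        have e : N - 1 + 1 = N := by omega
        have hs : S (X τ) N = S (X τ) (N-1) + X τ N := by
          conv_lhs => rw [← e]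
          rw [S_succ, e]
        have e2 : y 1 = -X τ N := by simp [hydef]
        rw [e2]
        linarith
      | succ n hn ih =>
        intro hN'
        have ihh := ih (by omega)
        rw [S_succ, ihh]
        have h1 : N - n = (N - (n+1)) + 1 := by omega
        have h2 : S (X τ) (N-n) = S (X τ) (N-(n+1)) + X τ (N-n) := by
          rw [h1, S_succ, ← h1]
        have e1 : N + 1 - (n+1) = N - n := by omega
        have e3 : y (n+1) = -X τ (N-n) := by rw [hydef]; simp only []; rw [e1]
        rw [e3]
        linarith
    have hSypos : ∀ n, 1 ≤ n → n < N → 0 < S y n ∧ S y n = S (X τ) (N-n) := by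
      intro n h1 h2
      have e := hSyn n h1 (by omega)
      rw [hXN0, sub_zero] at e
      have ht : S (X τ) (N-n) = T τ (N-n) := S_X τ (N-n) (by omega)
      refine ⟨?_, e⟩
      rw [e, ht]
      exact hτD (N-n) (by omega) (by omega)
    have hysol : IsSolution N y := by
      intro n h1 h2
      have h2' : n < N := by omega
      obtain ⟨hpos, he⟩ := hSypos n h1 h2'
      refine ⟨hpos.ne', ?_⟩
      have hx := Xstep τ (N-n) (by omega)
      have hT : T τ (N-n) = S (X τ) (N-n) := (S_X τ (N-n) (by omega)).symm
      rw [hT] at hx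
      have e1 : N + 1 - (n+1) = N - n := by omega
      have e2 : N + 1 - n = (N - n) + 1 := by omega
      have e3 : y (n+1) = -X τ (N-n) := by rw [hydef]; simp only []; rw [e1]
      have e4 : y n = -X τ ((N-n)+1) := by rw [hydef]; simp only []; rw [e2]
      rw [e3, e4, hx, he]
      ring
    have hydec : ∀ n, 1 ≤ n → n < N → y (n+1) < y n := by
      intro n h1 h2
      obtain ⟨hne, hrec⟩ := hysol n h1 (by omega)
      obtain ⟨hpos, _⟩ := hSypos n h1 h2
      rw [hrec]
      have : 0 < 1 / S y n := by positivity
      linarith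
    have hysum : ∑ i ∈ Finset.Icc 1 N, y i = 0 := by
      have h := hSyn N (by omega) le_rfl
      have e : N - N = 0 := by omega
      rw [e, S_zero, hXN0, sub_zero] at h
      exact h
    have h := huniq y ⟨hysol, hydec, hysum⟩
    intro n h1 h2
    have hh := h n h1 h2
    rw [hydef] at hh
    exact hh
  refine ⟨X τ, ⟨hsol, hdec, hsum⟩, ⟨?_, ?_⟩, huniq⟩
  · intro hodd
    obtain ⟨k, hk⟩ := hodd
    have e : N + 1 - ((N+1)/2) = (N+1)/2 := by omega
    have h := hrefl ((N+1)/2) (by omega) (by omega)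
    rw [e] at h
    linarith
  · intro heven
    obtain ⟨k, hk⟩ := heven
    have e : N + 1 - (N/2) = N/2 + 1 := by omega
    have h := hrefl (N/2) (by omega) (by omega)
    rw [e] at h
    linarith
end

section
/- For every n ≥ 2 the set R_n = {t > 0 : S_i(t) ≠ 0 for all 1 ≤ i < n, and x_n(t) = 0} is nonempty and has a greatest element a_n; the sequence (a_n)_{n≥2} is strictly increasing; and for every t > a_n one has S_i(t) > 0 for all 1 ≤ i < n and x_n(t) > 0, and the function t ↦ x_n(t) is strictly increasing and continuous on the interval (a_n, ∞). -/
open Finset Set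

/-- `XS t n = (x_n(t), S_n(t))`, defined recursively by `x_1(t) = t`, `S_1(t) = t`,
`x_{n+1}(t) = x_n(t) - 1/S_n(t)` and `S_{n+1}(t) = S_n(t) + x_{n+1}(t)`.
(When some `S_i(t) = 0` the junk convention `1/0 = 0` of real division applies, but the
statements below only concern parameters `t` for which the relevant `S_i(t) ≠ 0`.) -/
noncomputable def XS (t : ℝ) : ℕ → ℝ × ℝ
  | 0 => (0, 0)
  | 1 => (t, t)
  | (n + 2) =>
      ((XS t (n + 1)).1 - 1 / (XS t (n + 1)).2,
        (XS t (n + 1)).2 + ((XS t (n + 1)).1 - 1 / (XS t (n + 1)).2))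

/-- `x_n(t)`, the `n`-th term of the recursion started at `x_1(t) = t`. -/
noncomputable def xf (n : ℕ) (t : ℝ) : ℝ := (XS t n).1

/-- `S_n(t) = x_1(t) + ... + x_n(t)`, the `n`-th partial sum of the recursion started at
`x_1(t) = t`. -/
noncomputable def Sf (n : ℕ) (t : ℝ) : ℝ := (XS t n).2

/-- `R_n = {t > 0 : S_i(t) ≠ 0 for 1 ≤ i < n, and x_n(t) = 0}`. -/
def Rset (n : ℕ) : Set ℝ :=
  {t | 0 < t ∧ (∀ i, 1 ≤ i → i < n → Sf i t ≠ 0) ∧ xf n t = 0}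

/-- `Q_n = {t > 0 : S_i(t) ≠ 0 for 1 ≤ i < n, and S_n(t) = 0}`. -/
def Qset (n : ℕ) : Set ℝ :=
  {t | 0 < t ∧ (∀ i, 1 ≤ i → i < n → Sf i t ≠ 0) ∧ Sf n t = 0}

lemma xf_one (t : ℝ) : xf 1 t = t := rfl
lemma Sf_one (t : ℝ) : Sf 1 t = t := rfl
lemma xf_succ (n : ℕ) (t : ℝ) : xf (n+2) t = xf (n+1) t - 1 / Sf (n+1) t := rfl
lemma Sf_succ (n : ℕ) (t : ℝ) : Sf (n+2) t = Sf (n+1) t + xf (n+2) t := rfl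

lemma xf_succ' (n : ℕ) (hn : 1 ≤ n) (t : ℝ) : xf (n+1) t = xf n t - 1 / Sf n t := by
  cases n with
  | zero => omega
  | succ m => rfl

lemma Sf_succ' (n : ℕ) (hn : 1 ≤ n) (t : ℝ) : Sf (n+1) t = Sf n t + xf (n+1) t := by
  cases n with
  | zero => omega
  | succ m => rfl

lemma contAux (D : Set ℝ) :
    ∀ n, (∀ t ∈ D, ∀ i, 1 ≤ i → i ≤ n → Sf i t ≠ 0) →
      ContinuousOn (xf (n+1)) D ∧ ContinuousOn (Sf (n+1)) D := by
  intro n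
  induction n with
  | zero =>
    intro _
    constructor
    · exact (continuous_id).continuousOn
    · exact (continuous_id).continuousOn
  | succ m ih =>
    intro hD
    have ihm := ih (fun t ht i h1 h2 => hD t ht i h1 (by omega))
    have hne : ∀ t ∈ D, Sf (m+1) t ≠ 0 := fun t ht => hD t ht (m+1) (by omega) le_rfl
    have hx : ContinuousOn (xf (m+2)) D := by
      have : ContinuousOn (fun t => xf (m+1) t - 1 / Sf (m+1) t) D :=
        ihm.1.sub (continuousOn_const.div ihm.2 hne)
      exact this
    exact ⟨hx, ihm.2.add hx⟩

lemma monoAux (D : Set ℝ) :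
    ∀ n, StrictMonoOn (xf 1) D → (∀ t ∈ D, ∀ i, 1 ≤ i → i ≤ n → 0 < Sf i t) →
      StrictMonoOn (xf (n+1)) D ∧ StrictMonoOn (Sf (n+1)) D := by
  intro n
  induction n with
  | zero =>
    intro h _
    exact ⟨h, h⟩
  | succ m ih =>
    intro h1 hD
    have ihm := ih h1 (fun t ht i hi1 hi2 => hD t ht i hi1 (by omega))
    have hpos : ∀ t ∈ D, 0 < Sf (m+1) t := fun t ht => hD t ht (m+1) (by omega) le_rfl
    have hx : StrictMonoOn (xf (m+2)) D := by
      intro s hs t ht hst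
      rw [xf_succ, xf_succ]
      have h2 : Sf (m+1) s < Sf (m+1) t := ihm.2 hs ht hst
      have h3 : 1 / Sf (m+1) t < 1 / Sf (m+1) s :=
        one_div_lt_one_div_of_lt (hpos s hs) h2
      have h4 : xf (m+1) s < xf (m+1) t := ihm.1 hs ht hst
      linarith
    refine ⟨hx, ?_⟩
    intro s hs t ht hst
    rw [Sf_succ, Sf_succ]
    exact add_lt_add (ihm.2 hs ht hst) (hx hs ht hst)

lemma growth (n : ℕ) (t : ℝ) (hS : ∀ j, 1 ≤ j → j ≤ n → 0 < Sf j t)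
    (ht : (n : ℝ) + 2 ≤ t) : ∀ i, i ≤ n → t - i ≤ xf (i+1) t := by
  intro i
  induction i with
  | zero => intro _; simp [xf_one]
  | succ i ih =>
    intro hin
    have hx : t - i ≤ xf (i+1) t := ih (by omega)
    have hxbig : (2 : ℝ) ≤ xf (i+1) t := by
      have : (i : ℝ) ≤ n := by exact_mod_cast Nat.le_of_succ_le hin
      linarith
    have hSx : xf (i+1) t ≤ Sf (i+1) t := by
      cases i with
      | zero => simp [xf_one, Sf_one]
      | succ j =>
        rw [Sf_succ]
        have : 0 < Sf (j+1) t := hS (j+1) (by omega) (by omega)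
        linarith
    have hSpos : (1:ℝ) ≤ Sf (i+1) t := by linarith
    have hinv : 1 / Sf (i+1) t ≤ 1 := by
      rw [div_le_one (by linarith)]; linarith
    rw [xf_succ]
    push_cast
    linarith

/-- The inductive invariant. -/
def Pinv (a : ℝ) (n : ℕ) : Prop :=
  0 < a ∧ (∀ t, a ≤ t → ∀ i, 1 ≤ i → i ≤ n → 0 < Sf i t) ∧
    (∀ t, a < t → 0 < xf n t) ∧ xf n a = 0

lemma base_case : Pinv 1 2 := by
  refine ⟨one_pos, ?_, ?_, ?_⟩
  · intro t ht i h1 h2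
    interval_cases i
    · rw [Sf_one]; linarith
    · rw [Sf_succ, xf_succ, Sf_one, xf_one]
      have h1t : 1 / t ≤ 1 := by rw [div_le_one (by linarith)]; linarith
      linarith
  · intro t ht
    show 0 < xf 2 t
    rw [show (2:ℕ) = 0 + 2 from rfl, xf_succ, xf_one, Sf_one]
    have h1t : 1 / t < 1 := by rw [div_lt_one (by linarith)]; linarith
    linarith
  · show xf 2 1 = 0
    rw [show (2:ℕ) = 0 + 2 from rfl, xf_succ, xf_one, Sf_one]
    norm_num

lemma step_case (a : ℝ) (n : ℕ) (hn : 1 ≤ n) (h : Pinv a n) :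
    ∃ b, a < b ∧ Pinv b (n+1) := by
  obtain ⟨ha, hS, hx, hx0⟩ := h
  -- continuity of xf (n+1) on Ici a
  have hcont : ContinuousOn (xf (n+1)) (Ici a) :=
    (contAux (Ici a) n (fun t ht i h1 h2 => (hS t ht i h1 h2).ne')).1
  -- strict monotonicity of xf (n+1) on Ici a
  have hmono : StrictMonoOn (xf (n+1)) (Ici a) :=
    (monoAux (Ici a) n (fun s _ t _ hst => by simpa [xf_one] using hst)
      (fun t ht i h1 h2 => hS t ht i h1 h2)).1
  -- value at a is negative
  have hfa : xf (n+1) a < 0 := by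
    rw [xf_succ' n hn, hx0]
    have : 0 < Sf n a := hS a le_rfl n hn le_rfl
    have : 0 < 1 / Sf n a := by positivity
    linarith
  -- value at T is positive
  set T : ℝ := max a ((n : ℝ) + 2) with hT
  have haT : a ≤ T := le_max_left _ _
  have hTn : (n : ℝ) + 2 ≤ T := le_max_right _ _
  have hfT : 0 < xf (n+1) T := by
    have := growth n T (fun j h1 h2 => hS T haT j h1 h2) hTn n le_rfl
    have hcast : (n : ℝ) ≤ T - 2 := by linarith
    linarith
  -- IVT
  have hsub : Icc a T ⊆ Ici a := Icc_subset_Ici_self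
  have hiv := intermediate_value_Icc haT (hcont.mono hsub)
  have h0mem : (0 : ℝ) ∈ Icc (xf (n+1) a) (xf (n+1) T) := ⟨le_of_lt hfa, le_of_lt hfT⟩
  obtain ⟨b, hbmem, hfb⟩ := hiv h0mem
  have hab : a < b := by
    rcases lt_or_eq_of_le hbmem.1 with h | h
    · exact h
    · exfalso; rw [← h] at hfb; linarith
  have hmonotone : MonotoneOn (xf (n+1)) (Ici a) := hmono.monotoneOn
  refine ⟨b, hab, lt_trans ha hab, ?_, ?_, hfb⟩
  · intro t htb i h1 h2
    have hat : a ≤ t := le_trans (le_of_lt hab) htb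
    rcases Nat.lt_or_ge i (n+1) with hi | hi
    · exact hS t hat i h1 (by omega)
    · have hi' : i = n + 1 := by omega
      subst hi'
      rw [Sf_succ' n hn]
      have h1' : 0 < Sf n t := hS t hat n hn le_rfl
      have h2' : 0 ≤ xf (n+1) t := by
        have := hmonotone (le_of_lt hab : b ∈ Ici a) (hat : t ∈ Ici a) htb
        linarith [hfb]
      linarith
  · intro t htb
    have := hmono (le_of_lt hab : b ∈ Ici a) (le_trans (le_of_lt hab) (le_of_lt htb) : t ∈ Ici a) htb
    linarith [hfb]

lemma step2 (k : ℕ) (a : ℝ) (h : Pinv a (k+2)) : ∃ b, a < b ∧ Pinv b (k+3) :=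
  step_case a (k+2) (by omega) h

noncomputable def cseq : (k : ℕ) → {a : ℝ // Pinv a (k+2)}
  | 0 => ⟨1, base_case⟩
  | (k+1) => ⟨(step2 k (cseq k).1 (cseq k).2).choose,
      (step2 k (cseq k).1 (cseq k).2).choose_spec.2⟩

lemma cseq_lt (k : ℕ) : (cseq k).1 < (cseq (k+1)).1 := by
  have := (step2 k (cseq k).1 (cseq k).2).choose_spec.1
  simpa [cseq] using this

lemma cseq_mono : StrictMono (fun k => (cseq k).1) :=
  strictMono_nat_of_lt_succ cseq_lt

theorem Rset_isGreatest_and_properties' :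
    ∃ a : ℕ → ℝ,
      (∀ n, 2 ≤ n → IsGreatest (Rset n) (a n)) ∧
      StrictMonoOn a (Set.Ici 2) ∧
      (∀ n, 2 ≤ n → ∀ t, a n < t →
        (∀ i, 1 ≤ i → i < n → 0 < Sf i t) ∧ 0 < xf n t) ∧
      (∀ n, 2 ≤ n →
        StrictMonoOn (xf n) (Set.Ioi (a n)) ∧ ContinuousOn (xf n) (Set.Ioi (a n))) := by
  refine ⟨fun n => (cseq (n-2)).1, ?_, ?_, ?_, ?_⟩
  · intro n hn
    have hP : Pinv (cseq (n-2)).1 n := by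
      obtain ⟨m, rfl⟩ : ∃ m, n = m + 2 := ⟨n - 2, by omega⟩
      exact (cseq (m + 2 - 2)).2
    obtain ⟨ha, hS, hx, hx0⟩ := hP
    refine ⟨⟨ha, fun i h1 h2 => (hS _ le_rfl i h1 (by omega)).ne', hx0⟩, ?_⟩
    intro t ht
    by_contra h
    push_neg at h
    exact absurd ht.2.2 (hx t h).ne'
  · intro m hm n hn hmn
    exact cseq_mono (show m - 2 < n - 2 by simp only [Set.mem_Ici] at hm hn; omega)
  · intro n hn t ht
    have hP : Pinv (cseq (n-2)).1 n := by
      obtain ⟨m, rfl⟩ : ∃ m, n = m + 2 := ⟨n - 2, by omega⟩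
      exact (cseq (m + 2 - 2)).2
    obtain ⟨ha, hS, hx, hx0⟩ := hP
    exact ⟨fun i h1 h2 => hS t ht.le i h1 (by omega), hx t ht⟩
  · intro n hn
    have hP : Pinv (cseq (n-2)).1 n := by
      obtain ⟨m, rfl⟩ : ∃ m, n = m + 2 := ⟨n - 2, by omega⟩
      exact (cseq (m + 2 - 2)).2
    obtain ⟨ha, hS, hx, hx0⟩ := hP
    obtain ⟨m, rfl⟩ : ∃ m, n = m + 1 := ⟨n - 1, by omega⟩
    set a := (cseq (m + 1 - 2)).1
    constructor
    · exact (monoAux (Set.Ioi a) m (fun s _ t _ hst => by simpa [xf_one] using hst)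
        (fun t ht i h1 h2 => hS t (le_of_lt ht) i h1 (by omega))).1
    · exact (contAux (Set.Ioi a) m
        (fun t ht i h1 h2 => (hS t (le_of_lt ht) i h1 (by omega)).ne')).1

/-- For every `n ≥ 2`, `R_n` has a greatest element `a_n` (in particular it is nonempty);
the sequence `(a_n)_{n ≥ 2}` is strictly increasing; for every `t > a_n` all the partial sums
`S_i(t)` (for `1 ≤ i < n`) and `x_n(t)` are positive; and `t ↦ x_n(t)` is strictly
increasing and continuous on `(a_n, ∞)`. -/
theorem Rset_isGreatest_and_properties :
    ∃ a : ℕ → ℝ,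
      (∀ n, 2 ≤ n → IsGreatest (Rset n) (a n)) ∧
      StrictMonoOn a (Set.Ici 2) ∧
      (∀ n, 2 ≤ n → ∀ t, a n < t →
        (∀ i, 1 ≤ i → i < n → 0 < Sf i t) ∧ 0 < xf n t) ∧
      (∀ n, 2 ≤ n →
        StrictMonoOn (xf n) (Set.Ioi (a n)) ∧ ContinuousOn (xf n) (Set.Ioi (a n))) := by
  exact Rset_isGreatest_and_properties'
end

section
/- For every N ≥ 3, the unique strictly decreasing zero-mean solution of the recursion satisfies x_{N,1} ≥ √(log N)/2. -/
open Finset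

/-- Sum of harmonic numbers: `∑_{j=0}^{m} H_j = (m+1) H_m - m`. -/
lemma sum_harmonic_aux (m : ℕ) :
    ∑ j ∈ range (m + 1), (∑ k ∈ Icc 1 j, (k : ℝ)⁻¹)
      = (m + 1 : ℝ) * (∑ k ∈ Icc 1 m, (k : ℝ)⁻¹) - m := by
  induction m with
  | zero => simp
  | succ m ih =>
    rw [Finset.sum_range_succ, ih,
      Finset.sum_Icc_succ_top (by omega : 1 ≤ m + 1) (fun k => (k : ℝ)⁻¹)]
    have hm : ((m : ℝ) + 1) ≠ 0 := by positivity
    push_cast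
    field_simp
    ring

/-- The unique strictly decreasing zero-mean solution of the recursion satisfies
`x_{N,1} ≥ √(log N) / 2`. -/
theorem first_coordinate_lower_bound (N : ℕ) (hN : 3 ≤ N) (x : ℕ → ℝ)
    (hsol : IsSolution N x) (hdec : ∀ n, 1 ≤ n → n < N → x (n + 1) < x n)
    (hmean : ∑ i ∈ Finset.Icc 1 N, x i = 0) :
    Real.sqrt (Real.log N) / 2 ≤ x 1 := by
  have hSpos : ∀ n, 1 ≤ n → n ≤ N - 1 → 0 < S x n := by
    intro n h1 h2
    obtain ⟨hne, heq⟩ := hsol n h1 h2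
    have hlt := hdec n h1 (by omega)
    rw [heq] at hlt
    have h0 : 0 < 1 / S x n := by linarith
    exact (one_div_pos).mp h0
  have hx1 : 0 < x 1 := by
    have h := hSpos 1 le_rfl (by omega)
    simpa [S] using h
  have hxle : ∀ i, 1 ≤ i → i ≤ N → x i ≤ x 1 := by
    intro i h1 h2
    induction i with
    | zero => omega
    | succ k ih =>
      by_cases hk : 1 ≤ k
      · have h3 := hdec k hk (by omega)
        have h4 := ih hk (by omega)
        linarith
      · have : k = 0 := by omega
        subst this; exact le_rfl
  have hSle : ∀ n, 1 ≤ n → n ≤ N → S x n ≤ (n : ℝ) * x 1 := by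
    intro n h1 h2
    have h : S x n ≤ ∑ _i ∈ Icc 1 n, x 1 := by
      apply Finset.sum_le_sum
      intro i hi
      exact hxle i (mem_Icc.mp hi).1 (le_trans (mem_Icc.mp hi).2 h2)
    simpa [Nat.card_Icc, mul_comm] using h
  have key : ∀ j, j + 1 ≤ N → x (j + 1) ≤ x 1 - (∑ k ∈ Icc 1 j, (k : ℝ)⁻¹) / x 1 := by
    intro j
    induction j with
    | zero => intro _; simp
    | succ m ih =>
      intro h
      have hm := ih (by omega)
      obtain ⟨hne, heq⟩ := hsol (m + 1) (by omega) (by omega)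
      have hSp := hSpos (m + 1) (by omega) (by omega)
      have hSl := hSle (m + 1) (by omega) (by omega)
      have h1' : 1 / (((m + 1 : ℕ) : ℝ) * x 1) ≤ 1 / S x (m + 1) :=
        one_div_le_one_div_of_le hSp hSl
      rw [heq, Finset.sum_Icc_succ_top (by omega : 1 ≤ m + 1) (fun k => (k : ℝ)⁻¹)]
      have hm1 : (0 : ℝ) < (m : ℝ) + 1 := by positivity
      have expand : x 1 - ((∑ k ∈ Icc 1 m, (k : ℝ)⁻¹) + ((m : ℝ) + 1)⁻¹) / x 1
          = (x 1 - (∑ k ∈ Icc 1 m, (k : ℝ)⁻¹) / x 1) - 1 / (((m : ℝ) + 1) * x 1) := by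
        field_simp
        ring
      push_cast at h1' ⊢
      rw [expand]
      linarith
  -- summing up
  have hreindex : ∀ f : ℕ → ℝ, ∑ i ∈ Icc 1 N, f i = ∑ j ∈ range N, f (j + 1) := by
    intro f
    rw [← Finset.Ico_add_one_right_eq_Icc]
    rw [Finset.sum_Ico_eq_sum_range]
    simp [add_comm]
  set T : ℝ := ∑ j ∈ range N, (∑ k ∈ Icc 1 j, (k : ℝ)⁻¹) with hT
  have hsum_le : (0 : ℝ) ≤ (N : ℝ) * x 1 - T / x 1 := by
    have h0 : (0 : ℝ) = ∑ j ∈ range N, x (j + 1) := by rw [← hreindex x, hmean]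
    have h1 : ∑ j ∈ range N, x (j + 1)
        ≤ ∑ j ∈ range N, (x 1 - (∑ k ∈ Icc 1 j, (k : ℝ)⁻¹) / x 1) := by
      apply Finset.sum_le_sum
      intro j hj
      exact key j (by simpa using (Finset.mem_range.mp hj))
    have h2 : ∑ j ∈ range N, (x 1 - (∑ k ∈ Icc 1 j, (k : ℝ)⁻¹) / x 1)
        = (N : ℝ) * x 1 - T / x 1 := by
      rw [Finset.sum_sub_distrib, Finset.sum_const, Finset.card_range, hT,
        ← Finset.sum_div]
      push_cast
      ring
    linarith [h0, h1.trans_eq h2]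
  set H : ℝ := ∑ k ∈ Icc 1 (N - 1), (k : ℝ)⁻¹ with hH
  have hTval : T = (N : ℝ) * H - ((N : ℝ) - 1) := by
    have := sum_harmonic_aux (N - 1)
    have hN1 : N - 1 + 1 = N := by omega
    rw [hN1] at this
    rw [hT, hH, this]
    have : ((N - 1 : ℕ) : ℝ) = (N : ℝ) - 1 := by
      push_cast [Nat.cast_sub (by omega : 1 ≤ N)]; ring
    rw [this]
    ring
  have hx1sq : (N : ℝ) * H - ((N : ℝ) - 1) ≤ (N : ℝ) * (x 1 * x 1) := by
    have h1 : T / x 1 ≤ (N : ℝ) * x 1 := by linarith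
    have h2 : T ≤ (N : ℝ) * x 1 * x 1 := by
      rw [div_le_iff₀ hx1] at h1; linarith
    rw [hTval] at h2; linarith
  -- harmonic vs log
  have hlogH : Real.log N ≤ H := by
    have h := log_add_one_le_harmonic (N - 1)
    have hN1 : N - 1 + 1 = N := by omega
    rw [hN1] at h
    have : ((harmonic (N - 1) : ℚ) : ℝ) = H := by
      rw [hH, harmonic_eq_sum_Icc]; push_cast; ring
    rw [← this]; exact_mod_cast h
  have hNpos : (0 : ℝ) < N := by positivity
  have hfrac : ((N : ℝ) - 1) / N ≤ (3 / 4) * Real.log N := by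
    by_cases h4 : 4 ≤ N
    · have hN4 : (4 : ℝ) ≤ (N : ℝ) := by exact_mod_cast h4
      have hl4 : Real.log 4 ≤ Real.log N := Real.log_le_log (by norm_num) hN4
      have h43 : (4 : ℝ) / 3 ≤ Real.log 4 := by
        rw [show (4 : ℝ) = 2 ^ 2 by norm_num, Real.log_pow]
        have := Real.log_two_gt_d9
        push_cast
        linarith
      have hfr : ((N : ℝ) - 1) / N ≤ 1 := by
        rw [div_le_one hNpos]; linarith
      linarith
    · have hN3 : N = 3 := by omega
      subst hN3
      have h3 : (1 : ℝ) ≤ Real.log 3 := by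
        rw [← Real.log_exp 1]
        apply Real.log_le_log (Real.exp_pos 1)
        have := Real.exp_one_lt_d9
        linarith
      norm_num
      linarith
  have hfinal : Real.log N / 4 ≤ x 1 ^ 2 := by
    have h1 : (N : ℝ) * Real.log N - ((N : ℝ) - 1) ≤ (N : ℝ) * (x 1 * x 1) := by
      have : (N : ℝ) * Real.log N ≤ (N : ℝ) * H :=
        mul_le_mul_of_nonneg_left hlogH (le_of_lt hNpos)
      linarith
    have h2 : ((N : ℝ) - 1) ≤ (3 / 4) * Real.log N * N := by
      rw [div_le_iff₀ hNpos] at hfrac; linarith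
    nlinarith [hNpos]
  have hlogpos : 0 ≤ Real.log N := Real.log_nonneg (by exact_mod_cast Nat.one_le_of_lt hN)
  have hs4 : Real.sqrt 4 = 2 := by
    rw [show (4 : ℝ) = 2 ^ 2 by norm_num, Real.sqrt_sq (by norm_num : (0:ℝ) ≤ 2)]
  calc Real.sqrt (Real.log N) / 2 = Real.sqrt (Real.log N / 4) := by
        rw [Real.sqrt_div hlogpos, hs4]
    _ ≤ Real.sqrt (x 1 ^ 2) := Real.sqrt_le_sqrt hfinal
    _ = x 1 := Real.sqrt_sq hx1.le
end

section
/- There exists a coupling of the empirical distribution and the distribution with density y_N at distance at most the mesh: there is a probability measure μ on ℝ × ℝ whose first marginal is 𝕡_N = (1/N) Σ_{n=1}^N δ_{x_{N,n}} and whose second marginal is the measure with density y_N with respect to Lebesgue measure, such that μ-almost surely |u − v| ≤ δ_N := max_{1 ≤ n ≤ N−1} (x_{N,n} − x_{N,n+1}). -/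
/-!
The density `y_N` is constant on each cell `[x_{N,n+1}, x_{N,n})`, and by the recursion the cell
has length `1 / S_{N,n}`, so it carries mass `1 / (N - 1)`. Split cell `n` between its endpoints,
coupling the fraction `(N - n) / N` of it with the atom `x_{N,n}` and the fraction `n / N` with
`x_{N,n+1}`. Atom `x_{N,n}` then receives `((N - n) + (n - 1)) / (N (N - 1)) = 1 / N` in total, and
every coupled pair lies in the closure of a single cell, hence within the mesh.
-/

open Finset

/-- The piecewise-constant density `y_N`: it equals `S_{N,n}/(N-1)`
(equivalently `1/((N-1)(x_{N,n} - x_{N,n+1}))`) on `[x_{N,n+1}, x_{N,n})` for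
`n = 1, ..., N-1`, and `0` outside `[x_{N,N}, x_{N,1})`. -/
noncomputable def yDen (N : ℕ) (x : ℕ → ℝ) (t : ℝ) : ℝ :=
  ∑ n ∈ Finset.Icc 1 (N - 1), if x (n + 1) ≤ t ∧ t < x n then S x n / ((N : ℝ) - 1) else 0

open MeasureTheory
open scoped ENNReal NNReal

theorem sum_Icc_sub_smul_add_smul_succ {R M : Type*} [Semiring R] [AddCommMonoid M] [Module R M]
    (f : ℕ → M) (m : ℕ) :
    ∑ n ∈ Icc 1 m, (((m + 1 - n : ℕ) : R) • f n + (n : R) • f (n + 1)) =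
      (m : R) • ∑ n ∈ Icc 1 (m + 1), f n := by
  induction m with
  | zero => simp
  | succ m ih =>
    have hshift : ∀ n ∈ Icc 1 (m + 1), ((m + 1 + 1 - n : ℕ) : R) • f n + (n : R) • f (n + 1) =
        (((m + 1 - n : ℕ) : R) • f n + (n : R) • f (n + 1)) + f n := by
      intro n hn
      rw [show m + 1 + 1 - n = (m + 1 - n) + 1 by grind, Nat.cast_succ, add_smul, one_smul]
      abel
    rw [sum_congr rfl hshift, sum_add_distrib, sum_Icc_succ_top (by omega), ih,
      sum_Icc_succ_top (show 1 ≤ m + 1 + 1 by omega) f]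
    simp only [Nat.sub_self, Nat.cast_zero, zero_smul, zero_add, Nat.cast_succ, add_smul, one_smul,
      smul_add]
    abel

theorem ae_dirac_prod_of_ae {α β : Type*} [MeasurableSpace α] [MeasurableSpace β]
    [MeasurableSingletonClass α] {ν : Measure β} [SFinite ν] {p : α × β → Prop} (a : α)
    (h : ∀ᵐ t ∂ν, p (a, t)) : ∀ᵐ q ∂(Measure.dirac a).prod ν, p q := by
  rw [Measure.dirac_prod, (measurableEmbedding_prodMk_left a).ae_map_iff]
  exact h

theorem withDensity_finset_sum {α ι : Type*} [MeasurableSpace α] (μ : Measure α)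
    (s : Finset ι) {f : ι → α → ℝ≥0∞} (hf : ∀ i ∈ s, Measurable (f i)) :
    μ.withDensity (fun a => ∑ i ∈ s, f i a) = ∑ i ∈ s, μ.withDensity (f i) := by
  induction s using Finset.cons_induction with
  | empty => simp
  | cons i s hi ih =>
    simp only [sum_cons] at hf ⊢
    rw [← ih fun j hj => hf j (mem_cons_of_mem hj)]
    exact withDensity_add_left (hf i (mem_cons_self i s)) _

section StaircaseCoupling

variable {α β : Type*} [MeasurableSpace α] [MeasurableSpace β]

theorem isProbabilityMeasure_empirical {N : ℕ} (hN : N ≠ 0) (a : ℕ → α) :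
    IsProbabilityMeasure ((N : ℝ≥0∞)⁻¹ • ∑ n ∈ Icc 1 N, Measure.dirac (a n)) := by
  constructor
  simp [ENNReal.inv_mul_cancel (Nat.cast_ne_zero.2 hN) (ENNReal.natCast_ne_top N)]

variable {N : ℕ} {a : ℕ → α} {ν : ℕ → Measure β} [∀ n, SFinite (ν n)]

noncomputable def staircaseCoupling (N : ℕ) (a : ℕ → α) (ν : ℕ → Measure β) :
    Measure (α × β) :=
  ((N : ℝ≥0∞)⁻¹ * ((N - 1 : ℕ) : ℝ≥0∞)⁻¹) • ∑ n ∈ Icc 1 (N - 1),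
    (((N - n : ℕ) : ℝ≥0∞) • (Measure.dirac (a n)).prod (ν n)
      + (n : ℝ≥0∞) • (Measure.dirac (a (n + 1))).prod (ν n))

theorem map_fst_staircaseCoupling (hN : 2 ≤ N)
    (hν : ∀ n ∈ Icc 1 (N - 1), IsProbabilityMeasure (ν n)) :
    (staircaseCoupling N a ν).map Prod.fst =
      (N : ℝ≥0∞)⁻¹ • ∑ n ∈ Icc 1 N, Measure.dirac (a n) := by
  obtain ⟨m, rfl⟩ : ∃ m, N = m + 1 := ⟨N - 1, by omega⟩
  have hm : (m : ℝ≥0∞) ≠ 0 := Nat.cast_ne_zero.2 (by omega)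
  rw [staircaseCoupling, Measure.map_smul, Measure.map_finset_sum measurable_fst.aemeasurable,
    Nat.add_sub_cancel]
  have hcell : ∀ n ∈ Icc 1 m, ((((m + 1 - n : ℕ) : ℝ≥0∞) • (Measure.dirac (a n)).prod (ν n)
      + (n : ℝ≥0∞) • (Measure.dirac (a (n + 1))).prod (ν n))).map Prod.fst =
      ((m + 1 - n : ℕ) : ℝ≥0∞) • Measure.dirac (a n) + (n : ℝ≥0∞) • Measure.dirac (a (n + 1)) := by
    intro n hn
    have := hν n (by simpa using hn)
    simp [Measure.map_add _ _ measurable_fst, Measure.map_smul]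
  rw [sum_congr rfl hcell, sum_Icc_sub_smul_add_smul_succ, smul_smul, mul_assoc,
    ENNReal.inv_mul_cancel hm (ENNReal.natCast_ne_top m), mul_one]

theorem map_snd_staircaseCoupling (hN : N ≠ 0) :
    (staircaseCoupling N a ν).map Prod.snd =
      ((N - 1 : ℕ) : ℝ≥0∞)⁻¹ • ∑ n ∈ Icc 1 (N - 1), ν n := by
  have hcell : ∀ n ∈ Icc 1 (N - 1), ((((N - n : ℕ) : ℝ≥0∞) • (Measure.dirac (a n)).prod (ν n)
      + (n : ℝ≥0∞) • (Measure.dirac (a (n + 1))).prod (ν n))).map Prod.snd =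
      (N : ℝ≥0∞) • ν n := by
    intro n hn
    rw [Measure.map_add _ _ measurable_snd, Measure.map_smul, Measure.map_smul,
      Measure.map_snd_prod, Measure.map_snd_prod, measure_univ, measure_univ, one_smul,
      ← add_smul, ← Nat.cast_add, Nat.sub_add_cancel (by grind)]
  rw [staircaseCoupling, Measure.map_smul, Measure.map_finset_sum measurable_snd.aemeasurable,
    sum_congr rfl hcell, ← smul_sum, smul_smul, mul_right_comm,
    ENNReal.inv_mul_cancel (Nat.cast_ne_zero.2 hN) (ENNReal.natCast_ne_top N), one_mul]

theorem ae_staircaseCoupling [MeasurableSingletonClass α] {p : α × β → Prop}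
    (h : ∀ n ∈ Icc 1 (N - 1), ∀ᵐ t ∂ν n, p (a n, t) ∧ p (a (n + 1), t)) :
    ∀ᵐ q ∂staircaseCoupling N a ν, p q := by
  refine Measure.ae_smul_measure ?_ _
  rw [← Measure.sum_coe_finset, Measure.ae_sum_iff]
  rintro ⟨n, hn⟩
  rw [ae_add_measure_iff]
  exact ⟨Measure.ae_smul_measure (ae_dirac_prod_of_ae _ ((h n hn).mono fun _ => And.left)) _,
    Measure.ae_smul_measure (ae_dirac_prod_of_ae _ ((h n hn).mono fun _ => And.right)) _⟩

end StaircaseCoupling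

section Solution

variable {N n : ℕ} {x : ℕ → ℝ}

theorem IsSolution.sub_succ_eq_inv (hsol : IsSolution N x) (hn : n ∈ Icc 1 (N - 1)) :
    x n - x (n + 1) = (S x n)⁻¹ := by
  rw [mem_Icc] at hn
  rw [(hsol n hn.1 hn.2).2]
  ring

theorem IsSolution.S_pos (hsol : IsSolution N x) (hn : n ∈ Icc 1 (N - 1))
    (hlt : x (n + 1) < x n) : 0 < S x n := by
  rw [← inv_pos, ← hsol.sub_succ_eq_inv hn]
  linarith

noncomputable def cellMeasure (x : ℕ → ℝ) (n : ℕ) : Measure ℝ :=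
  ENNReal.ofReal (S x n) • volume.restrict (Set.Ico (x (n + 1)) (x n))

instance (x : ℕ → ℝ) (n : ℕ) : SFinite (cellMeasure x n) := by
  unfold cellMeasure
  infer_instance

theorem ae_mem_cellMeasure (x : ℕ → ℝ) (n : ℕ) :
    ∀ᵐ t ∂cellMeasure x n, t ∈ Set.Ico (x (n + 1)) (x n) :=
  Measure.ae_smul_measure (ae_restrict_mem measurableSet_Ico) _

theorem IsSolution.isProbabilityMeasure_cellMeasure (hsol : IsSolution N x)
    (hn : n ∈ Icc 1 (N - 1)) (hlt : x (n + 1) < x n) :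
    IsProbabilityMeasure (cellMeasure x n) := by
  constructor
  rw [cellMeasure, Measure.smul_apply, Measure.restrict_apply_univ, Real.volume_Ico,
    hsol.sub_succ_eq_inv hn, smul_eq_mul, ← ENNReal.ofReal_mul (hsol.S_pos hn hlt).le,
    mul_inv_cancel₀ (hsol.S_pos hn hlt).ne', ENNReal.ofReal_one]

theorem IsSolution.withDensity_yDen (hsol : IsSolution N x) (hN : 2 ≤ N)
    (hdec : ∀ n ∈ Icc 1 (N - 1), x (n + 1) < x n) :
    volume.withDensity (fun t => ENNReal.ofReal (yDen N x t)) =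
      ((N - 1 : ℕ) : ℝ≥0∞)⁻¹ • ∑ n ∈ Icc 1 (N - 1), cellMeasure x n := by
  have hN1 : (0 : ℝ) < (N : ℝ) - 1 := by
    have : (2 : ℝ) ≤ N := by exact_mod_cast hN
    linarith
  have hcoef : ∀ n ∈ Icc 1 (N - 1), ENNReal.ofReal (S x n / ((N : ℝ) - 1)) =
      ((N - 1 : ℕ) : ℝ≥0∞)⁻¹ * ENNReal.ofReal (S x n) := by
    intro n hn
    rw [ENNReal.ofReal_div_of_pos hN1, div_eq_mul_inv, mul_comm, ← ENNReal.ofReal_natCast,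
      Nat.cast_sub (by omega), Nat.cast_one]
  have hdensity : (fun t => ENNReal.ofReal (yDen N x t)) = fun t => ∑ n ∈ Icc 1 (N - 1),
      (Set.Ico (x (n + 1)) (x n)).indicator
        (fun _ => ((N - 1 : ℕ) : ℝ≥0∞)⁻¹ * ENNReal.ofReal (S x n)) t := by
    funext t
    rw [yDen, ENNReal.ofReal_sum_of_nonneg fun n hn => by
      split_ifs
      · exact div_nonneg (hsol.S_pos hn (hdec n hn)).le hN1.le
      · exact le_rfl]
    refine sum_congr rfl fun n hn => ?_
    rw [← hcoef n hn]
    split_ifs with ht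
    · exact (Set.indicator_of_mem (Set.mem_Ico.2 ht) (fun _ => ENNReal.ofReal _)).symm
    · rw [ENNReal.ofReal_zero, Set.indicator_of_notMem (fun h => ht (Set.mem_Ico.1 h))]
  rw [hdensity, withDensity_finset_sum _ _
    fun n _ => measurable_const.indicator measurableSet_Ico, smul_sum]
  refine sum_congr rfl fun n _ => ?_
  rw [withDensity_indicator measurableSet_Ico, withDensity_const, cellMeasure, smul_smul]

end Solution

/-- There is a coupling `μ` of the empirical distribution `𝕡_N = (1/N) ∑_{n=1}^N δ_{x_{N,n}}`
and the distribution with density `y_N` such that `μ`-almost surely the two coordinates are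
within the mesh `δ_N = max_{1 ≤ n ≤ N-1} (x_{N,n} - x_{N,n+1})` of each other. -/
theorem coupling_within_mesh (N : ℕ) (hN : 3 ≤ N) (x : ℕ → ℝ)
    (hsol : IsSolution N x) (hdec : ∀ n, 1 ≤ n → n < N → x (n + 1) < x n) :
    ∃ μ : Measure (ℝ × ℝ), IsProbabilityMeasure μ ∧
      μ.map Prod.fst = (N : ℝ≥0∞)⁻¹ • ∑ n ∈ Finset.Icc 1 N, Measure.dirac (x n) ∧
      μ.map Prod.snd = volume.withDensity (fun t => ENNReal.ofReal (yDen N x t)) ∧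
      ∀ᵐ p ∂μ, |p.1 - p.2| ≤
        (Finset.Icc 1 (N - 1)).sup' (by rw [Finset.nonempty_Icc]; omega)
          (fun n => x n - x (n + 1)) := by
  have hcell : ∀ n ∈ Icc 1 (N - 1), x (n + 1) < x n := fun n hn =>
    hdec n (mem_Icc.1 hn).1 (by grind)
  have hfst := map_fst_staircaseCoupling (a := x) (by omega) fun n hn =>
    hsol.isProbabilityMeasure_cellMeasure hn (hcell n hn)
  have : IsProbabilityMeasure ((staircaseCoupling N x (cellMeasure x)).map Prod.fst) := by
    rw [hfst]
    exact isProbabilityMeasure_empirical (by omega) x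
  refine ⟨staircaseCoupling N x (cellMeasure x), Measure.isProbabilityMeasure_of_map Prod.fst,
    hfst, by rw [map_snd_staircaseCoupling (by omega), hsol.withDensity_yDen (by omega) hcell],
    ae_staircaseCoupling fun n hn => (ae_mem_cellMeasure x n).mono fun t ht => ?_⟩
  have hmesh := le_sup' (fun n => x n - x (n + 1)) hn
  have ht' := Set.Ico_subset_Icc_self ht
  exact ⟨(Real.dist_le_of_mem_Icc ⟨(hcell n hn).le, le_rfl⟩ ht').trans hmesh,
    (Real.dist_le_of_mem_Icc ⟨le_rfl, (hcell n hn).le⟩ ht').trans hmesh⟩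
end

section
/- For every N ≥ 2 and all real numbers x_1 > x_2 > … > x_N with mean x̄ = (x_1 + … + x_N)/N, one has U(x) · Σ_{n=1}^N (x_n − x̄)² ≥ (N−1)², and consequently U(x) · V(x) ≥ (N−1)². -/
/-!
Write `aₙ = 1/(x_{n+1} - xₙ)` for `1 ≤ n < N` and `a₀ = a_N = 0`, so that
`U(x) = ∑ₙ (aₙ - a_{n-1})²`. Summation by parts turns `∑ₙ (aₙ - a_{n-1}) (xₙ - c)` into
`∑_{n<N} aₙ (xₙ - x_{n+1}) = -(N - 1)` for every constant `c`, and Cauchy–Schwarz gives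
`(N - 1)² ≤ U(x) ∑ₙ (xₙ - c)²`. Take `c = x̄` and `c = 0`.
-/

open Finset

/-- The classical potential `V(x) = ∑_{n=1}^N x_n²`. -/
noncomputable def Vpot (N : ℕ) (x : ℕ → ℝ) : ℝ := ∑ n ∈ Finset.Icc 1 N, x n ^ 2

/-- The interworld potential
`U(x) = ∑_{n=1}^N (1/(x_{n+1} - x_n) - 1/(x_n - x_{n-1}))²`, with the convention that the
term `1/(x_1 - x_0)` is taken to be `0` in the `n = 1` summand and `1/(x_{N+1} - x_N)` is
taken to be `0` in the `n = N` summand (corresponding to `x_0 = +∞`, `x_{N+1} = -∞`). -/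
noncomputable def Upot (N : ℕ) (x : ℕ → ℝ) : ℝ :=
  ∑ n ∈ Finset.Icc 1 N,
    ((if n < N then 1 / (x (n + 1) - x n) else 0) -
      (if 1 < n then 1 / (x n - x (n - 1)) else 0)) ^ 2

noncomputable def invGap (N : ℕ) (x : ℕ → ℝ) (n : ℕ) : ℝ :=
  if 1 ≤ n ∧ n < N then 1 / (x (n + 1) - x n) else 0

lemma Upot_eq_sum_sq_invGap_sub (N : ℕ) (x : ℕ → ℝ) :
    Upot N x = ∑ n ∈ Icc 1 N, (invGap N x n - invGap N x (n - 1)) ^ 2 := by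
  refine sum_congr rfl fun n hn => ?_
  obtain ⟨h1, h2⟩ := mem_Icc.mp hn
  congr 2
  · simp [invGap, h1]
  · rcases Nat.lt_or_ge 1 n with h | h
    · have hprev : 1 ≤ n - 1 ∧ n - 1 < N := by omega
      simp [invGap, h, hprev, Nat.sub_add_cancel h1]
    · simp [invGap, h.not_gt, show n - 1 = 0 by omega]

lemma sum_Icc_sub_mul_eq {R : Type*} [CommRing R] (a y : ℕ → R) {N : ℕ} (hN : 1 ≤ N) :
    ∑ n ∈ Icc 1 N, (a n - a (n - 1)) * y n =
      a N * y N - a 0 * y 1 + ∑ n ∈ Ico 1 N, a n * (y n - y (n + 1)) := by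
  induction N, hN using Nat.le_induction with
  | base => simp [sub_mul]
  | succ N hN ih =>
    rw [sum_Icc_succ_top (by omega), ih, sum_Ico_succ_top hN, Nat.add_sub_cancel]
    ring

lemma sum_invGap_sub_mul_sub_eq {N : ℕ} (hN : 1 ≤ N) {x : ℕ → ℝ}
    (hx : ∀ n, 1 ≤ n → n < N → x (n + 1) ≠ x n) (c : ℝ) :
    ∑ n ∈ Icc 1 N, (invGap N x n - invGap N x (n - 1)) * (x n - c) = -((N : ℝ) - 1) := by
  have hterm : ∀ n ∈ Ico 1 N, invGap N x n * ((x n - c) - (x (n + 1) - c)) = -1 := by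
    intro n hn
    obtain ⟨h1, h2⟩ := mem_Ico.mp hn
    have hgap : x (n + 1) - x n ≠ 0 := sub_ne_zero.mpr (hx n h1 h2)
    simp only [invGap, h1, h2, and_self, if_true]
    field_simp
    ring
  rw [sum_Icc_sub_mul_eq _ _ hN, sum_congr rfl hterm]
  simp [invGap, Nat.cast_sub hN]

theorem sq_sub_one_le_Upot_mul_sum_sq_sub {N : ℕ} (hN : 1 ≤ N) {x : ℕ → ℝ}
    (hx : ∀ n, 1 ≤ n → n < N → x (n + 1) ≠ x n) (c : ℝ) :
    ((N : ℝ) - 1) ^ 2 ≤ Upot N x * ∑ n ∈ Icc 1 N, (x n - c) ^ 2 := by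
  calc ((N : ℝ) - 1) ^ 2
      = (∑ n ∈ Icc 1 N, (invGap N x n - invGap N x (n - 1)) * (x n - c)) ^ 2 := by
        rw [sum_invGap_sub_mul_sub_eq hN hx, neg_sq]
    _ ≤ Upot N x * ∑ n ∈ Icc 1 N, (x n - c) ^ 2 := by
        rw [Upot_eq_sum_sq_invGap_sub]
        exact sum_mul_sq_le_sq_mul_sq _ _ _

/-- For `N ≥ 2` and `x_1 > x_2 > ... > x_N` with mean `x̄`,
`U(x) · ∑_{n=1}^N (x_n - x̄)² ≥ (N-1)²`, and consequently `U(x) · V(x) ≥ (N-1)²`. -/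
theorem Upot_mul_variance_ge (N : ℕ) (hN : 2 ≤ N) (x : ℕ → ℝ)
    (hdec : ∀ n, 1 ≤ n → n < N → x (n + 1) < x n) :
    ((N : ℝ) - 1) ^ 2 ≤
        Upot N x *
          ∑ n ∈ Finset.Icc 1 N, (x n - (∑ i ∈ Finset.Icc 1 N, x i) / N) ^ 2 ∧
      ((N : ℝ) - 1) ^ 2 ≤ Upot N x * Vpot N x := by
  have hN₁ : 1 ≤ N := by omega
  have hx : ∀ n, 1 ≤ n → n < N → x (n + 1) ≠ x n := fun n h1 h2 => (hdec n h1 h2).ne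
  refine ⟨sq_sub_one_le_Upot_mul_sum_sq_sub hN₁ hx _, ?_⟩
  simpa [Vpot] using sq_sub_one_le_Upot_mul_sum_sq_sub hN₁ hx 0
end

section
/- For every N ≥ 2 and all real numbers x_1 > x_2 > … > x_N, the Hamiltonian satisfies H(x) = U(x) + V(x) ≥ 2(N−1). -/
open Finset

/-- Summation by parts helper. -/
lemma abel_sum (x c : ℕ → ℝ) (hc0 : c 0 = 0) (N : ℕ) :
    ∑ n ∈ Finset.Icc 1 N, x n * (c (n - 1) - c n) =
      (∑ n ∈ Finset.Icc 1 (N - 1), c n * (x (n + 1) - x n)) - x N * c N := by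
  induction N with
  | zero => simp [hc0]
  | succ N ih =>
    rw [Finset.sum_Icc_succ_top (by omega : 1 ≤ N + 1)]
    cases N with
    | zero => simp [hc0]
    | succ M =>
      rw [ih]
      simp only [Nat.add_sub_cancel]
      rw [Finset.sum_Icc_succ_top (by omega : 1 ≤ M + 1)]
      ring

/-- For `N ≥ 2` and `x_1 > x_2 > ... > x_N`, the Hamiltonian satisfies
`H(x) = U(x) + V(x) ≥ 2(N-1)`. -/
theorem hamiltonian_ge (N : ℕ) (hN : 2 ≤ N) (x : ℕ → ℝ)
    (hdec : ∀ n, 1 ≤ n → n < N → x (n + 1) < x n) :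
    2 * ((N : ℝ) - 1) ≤ Upot N x + Vpot N x := by
  set b : ℕ → ℝ := fun n => if 1 ≤ n ∧ n < N then 1 / (x (n + 1) - x n) else 0 with hb
  have hU : Upot N x = ∑ n ∈ Finset.Icc 1 N, (b n - b (n - 1)) ^ 2 := by
    apply Finset.sum_congr rfl
    intro n hn
    simp only [Finset.mem_Icc] at hn
    congr 1
    have hbn : b n = if n < N then 1 / (x (n + 1) - x n) else 0 := by
      simp only [hb]
      by_cases h : n < N <;> simp [h, hn.1]
    rw [hbn]
    congr 1
    by_cases h : 1 < n
    · simp only [hb, h, if_pos]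
      have h1 : 1 ≤ n - 1 := by omega
      have h2 : n - 1 < N := by omega
      have h3 : n - 1 + 1 = n := by omega
      simp [h1, h2, h3]
    · have : n = 1 := by omega
      simp [this, hb]
  have key : ∑ n ∈ Finset.Icc 1 N, x n * (b (n - 1) - b n) = (N : ℝ) - 1 := by
    rw [abel_sum x b (by simp [hb]) N]
    have hbN : b N = 0 := by simp [hb]
    rw [hbN]
    have : ∑ n ∈ Finset.Icc 1 (N - 1), b n * (x (n + 1) - x n) =
        ∑ n ∈ Finset.Icc 1 (N - 1), (1 : ℝ) := by
      apply Finset.sum_congr rfl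
      intro n hn
      simp only [Finset.mem_Icc] at hn
      have h1 : 1 ≤ n := hn.1
      have h2 : n < N := by omega
      have hne : x (n + 1) - x n ≠ 0 := by
        have := hdec n h1 h2; linarith
      simp only [hb, h1, h2, and_self, if_true]
      field_simp
    rw [this, Finset.sum_const, Nat.card_Icc]
    have : N - 1 + 1 - 1 = N - 1 := by omega
    rw [this]
    have : ((N - 1 : ℕ) : ℝ) = (N : ℝ) - 1 := by
      have := Nat.cast_sub (by omega : 1 ≤ N) (R := ℝ)
      simpa using this
    simp [this]
  have hle : ∑ n ∈ Finset.Icc 1 N, 2 * (x n * (b (n - 1) - b n)) ≤ Upot N x + Vpot N x := by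
    rw [hU, Vpot, ← Finset.sum_add_distrib]
    apply Finset.sum_le_sum
    intro n _
    nlinarith [sq_nonneg (b n - b (n - 1) + x n)]
  calc 2 * ((N : ℝ) - 1) = ∑ n ∈ Finset.Icc 1 N, 2 * (x n * (b (n - 1) - b n)) := by
        rw [← Finset.mul_sum, key]
    _ ≤ Upot N x + Vpot N x := hle
end

section
/- Suppose x_1 > x_2 > … > x_N (N ≥ 2) satisfies the recursion x_{n+1} = x_n − 1/S_n with S_n = x_1 + … + x_n ≠ 0 for n = 1, …, N−1, together with zero mean x_1 + … + x_N = 0 and variance identity x_1² + … + x_N² = N−1. Then U(x) = N−1 and the Hamiltonian attains its minimum value: H(x) = U(x) + V(x) = 2(N−1). -/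
open Finset

lemma S_step (x : ℕ → ℝ) (n : ℕ) (hn : 1 ≤ n) : S x n = S x (n - 1) + x n := by
  obtain ⟨m, rfl⟩ : ∃ m, n = m + 1 := ⟨n - 1, by omega⟩
  simp only [S, Nat.add_sub_cancel]
  exact Finset.sum_Icc_succ_top (by omega) x

/-- If `x_1 > x_2 > ... > x_N` satisfies the recursion `x_{n+1} = x_n - 1/S_n` (with
`S_n ≠ 0` for `n = 1, ..., N-1`), has zero mean, and satisfies the variance identity
`x_1² + ... + x_N² = N - 1`, then `U(x) = N - 1` and the Hamiltonian attains its minimum: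
`H(x) = U(x) + V(x) = 2(N-1)`. -/
theorem hamiltonian_attains_minimum (N : ℕ) (hN : 2 ≤ N) (x : ℕ → ℝ)
    (hdec : ∀ n, 1 ≤ n → n < N → x (n + 1) < x n)
    (hsol : ∀ n, 1 ≤ n → n ≤ N - 1 → S x n ≠ 0 ∧ x (n + 1) = x n - 1 / S x n)
    (hmean : ∑ i ∈ Finset.Icc 1 N, x i = 0)
    (hvar : ∑ i ∈ Finset.Icc 1 N, x i ^ 2 = (N : ℝ) - 1) :
    Upot N x = (N : ℝ) - 1 ∧ Upot N x + Vpot N x = 2 * ((N : ℝ) - 1) := by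
  -- inverse gaps equal -S
  have hinv : ∀ m, 1 ≤ m → m ≤ N - 1 → 1 / (x (m + 1) - x m) = -S x m := by
    intro m h1 h2
    obtain ⟨hS, hrec⟩ := hsol m h1 h2
    rw [hrec, show x m - 1 / S x m - x m = -(1 / S x m) by ring, one_div, inv_neg, one_div, inv_inv]
  have hSN : S x N = 0 := hmean
  have key : ∀ n ∈ Finset.Icc 1 N,
      ((if n < N then 1 / (x (n + 1) - x n) else 0) -
        (if 1 < n then 1 / (x n - x (n - 1)) else 0)) ^ 2 = x n ^ 2 := by
    intro n hn
    rw [Finset.mem_Icc] at hn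
    obtain ⟨h1, h2⟩ := hn
    by_cases hlt : n < N
    · rw [if_pos hlt, hinv n h1 (by omega)]
      by_cases h1' : 1 < n
      · rw [if_pos h1']
        have hm : 1 / (x ((n - 1) + 1) - x (n - 1)) = -S x (n - 1) :=
          hinv (n - 1) (by omega) (by omega)
        rw [show (n - 1) + 1 = n by omega] at hm
        rw [hm, S_step x n h1]
        ring
      · rw [if_neg h1']
        have : n = 1 := by omega
        subst this
        have : S x 1 = x 1 := by simp [S]
        rw [this]; ring
    · rw [if_neg hlt, if_pos (by omega : 1 < n)]
      have hnN : n = N := by omega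
      rw [hnN]
      have hm : 1 / (x ((N - 1) + 1) - x (N - 1)) = -S x (N - 1) :=
        hinv (N - 1) (by omega) le_rfl
      rw [show (N - 1) + 1 = N by omega] at hm
      rw [hm]
      have : S x (N - 1) = -x N := by
        have := S_step x N (by omega)
        rw [hSN] at this; linarith
      rw [this]; ring
  have hU : Upot N x = (N : ℝ) - 1 := by
    rw [Upot, Finset.sum_congr rfl key, hvar]
  refine ⟨hU, ?_⟩
  rw [hU, Vpot, hvar]; ring
end

section
/- Let m ≥ 1 and let Z_1, …, Z_m, Z′ be independent standard Gaussian random variables, and let I be uniformly distributed on {1, …, m}, independent of (Z_1, …, Z_m, Z′). Set Y_0 = Z_1 + … + Z_m and let Y_1 = Y_0 − Z_I + Z′ be the sum after a random single replacement. Then the innovation ε = Y_1 − (1 − 1/m) Y_0 is Gaussian with mean 0 and variance 2 − 1/m, and ε is independent of Y_0. -/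
/-!
Fix a value `k` of the index. Then `ε` and `Y₀` are linear forms in the independent standard
Gaussians `(Z₁, …, Z_m, Z')`, hence jointly Gaussian, and their coefficient vectors are
orthogonal, so they are uncorrelated and therefore independent, with variances `2 - 1/m` and
`m`. This joint law does not depend on `k`, and `I` is independent of the Gaussians, so it is
also the joint law of `(ε, Y₀)` with the random index `I`.
-/

open MeasureTheory ProbabilityTheory
open scoped NNReal ENNReal

section StandardGaussianFamily

variable {Ω ι : Type*} {mΩ : MeasurableSpace Ω} {P : Measure Ω} {ξ : ι → Ω → ℝ}

lemma covariance_eq_ite_of_iIndepFun_gaussianReal [DecidableEq ι]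
    (hlaw : ∀ i, HasLaw (ξ i) (gaussianReal 0 1) P) (hind : iIndepFun ξ P) (i j : ι) :
    cov[ξ i, ξ j; P] = if i = j then 1 else 0 := by
  split_ifs with hij
  · subst hij
    rw [covariance_self (hlaw i).aemeasurable, (hlaw i).variance_eq, variance_id_gaussianReal,
      NNReal.coe_one]
  · exact (hind.indepFun hij).covariance_eq_zero ((hlaw i).hasGaussianLaw.memLp_two)
      ((hlaw j).hasGaussianLaw.memLp_two)

variable [Fintype ι]

lemma hasGaussianLaw_sum_mul_prodMk (hlaw : ∀ i, HasLaw (ξ i) (gaussianReal 0 1) P)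
    (hind : iIndepFun ξ P) (a b : ι → ℝ) :
    HasGaussianLaw (fun ω ↦ (∑ i, a i * ξ i ω, ∑ i, b i * ξ i ω)) P := by
  have hvec := hind.hasGaussianLaw fun i ↦ (hlaw i).hasGaussianLaw
  let proj (i : ι) : (ι → ℝ) →L[ℝ] ℝ := ContinuousLinearMap.proj i
  refine (hvec.map_fun ((∑ i, a i • proj i).prod (∑ i, b i • proj i))).congr
    (ae_of_all _ fun ω ↦ ?_)
  simp [proj]

variable [IsProbabilityMeasure P]

lemma covariance_sum_mul_of_iIndepFun_gaussianReal
    (hlaw : ∀ i, HasLaw (ξ i) (gaussianReal 0 1) P) (hind : iIndepFun ξ P) (a b : ι → ℝ) :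
    cov[fun ω ↦ ∑ i, a i * ξ i ω, fun ω ↦ ∑ i, b i * ξ i ω; P] = ∑ i, a i * b i := by
  classical
  have hL2 : ∀ (c : ι → ℝ) i, MemLp (fun ω ↦ c i * ξ i ω) 2 P :=
    fun c i ↦ (hlaw i).hasGaussianLaw.memLp_two.const_mul (c i)
  rw [covariance_fun_sum_fun_sum (hL2 a) (hL2 b)]
  simp_rw [covariance_const_mul_left, covariance_const_mul_right,
    covariance_eq_ite_of_iIndepFun_gaussianReal hlaw hind]
  simp

lemma map_sum_mul_eq_gaussianReal (hlaw : ∀ i, HasLaw (ξ i) (gaussianReal 0 1) P)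
    (hind : iIndepFun ξ P) (a : ι → ℝ) {v : ℝ≥0} (hv : (v : ℝ) = ∑ i, a i ^ 2) :
    P.map (fun ω ↦ ∑ i, a i * ξ i ω) = gaussianReal 0 v := by
  have hgauss := (hasGaussianLaw_sum_mul_prodMk hlaw hind a a).fst
  have hmean : P[fun ω ↦ ∑ i, a i * ξ i ω] = 0 := by
    rw [integral_finsetSum _ fun i _ ↦ ((hlaw i).hasGaussianLaw.integrable).const_mul (a i)]
    simp [integral_const_mul, (hlaw _).integral_eq, integral_id_gaussianReal]
  have hvar : Var[fun ω ↦ ∑ i, a i * ξ i ω; P] = v := by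
    rw [← covariance_self hgauss.aemeasurable,
      covariance_sum_mul_of_iIndepFun_gaussianReal hlaw hind, hv]
    simp [sq]
  rw [hgauss.map_eq_gaussianReal, hmean, hvar, Real.toNNReal_coe]

lemma map_prodMk_sum_mul_eq_prod_gaussianReal (hlaw : ∀ i, HasLaw (ξ i) (gaussianReal 0 1) P)
    (hind : iIndepFun ξ P) {a b : ι → ℝ} (horth : ∑ i, a i * b i = 0) {v w : ℝ≥0}
    (hv : (v : ℝ) = ∑ i, a i ^ 2) (hw : (w : ℝ) = ∑ i, b i ^ 2) :
    P.map (fun ω ↦ (∑ i, a i * ξ i ω, ∑ i, b i * ξ i ω)) =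
      (gaussianReal 0 v).prod (gaussianReal 0 w) := by
  have hgauss := hasGaussianLaw_sum_mul_prodMk hlaw hind a b
  have hindep : IndepFun (fun ω ↦ ∑ i, a i * ξ i ω) (fun ω ↦ ∑ i, b i * ξ i ω) P :=
    hgauss.indepFun_of_covariance_eq_zero
      (by rw [covariance_sum_mul_of_iIndepFun_gaussianReal hlaw hind, horth])
  rw [(indepFun_iff_map_prod_eq_prod_map_map hgauss.fst.aemeasurable
    hgauss.snd.aemeasurable).1 hindep, map_sum_mul_eq_gaussianReal hlaw hind a hv,
    map_sum_mul_eq_gaussianReal hlaw hind b hw]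

end StandardGaussianFamily

lemma map_apply_index_eq_of_indepFun {Ω ι E F : Type*} {mΩ : MeasurableSpace Ω} {P : Measure Ω}
    [IsProbabilityMeasure P] [MeasurableSpace ι] [Countable ι] [MeasurableSingletonClass ι]
    [MeasurableSpace E] [MeasurableSpace F] {I : Ω → ι} {X : Ω → E}
    (hI : Measurable I) (hX : Measurable X) (hind : IndepFun I X P)
    {φ : ι → E → F} (hφ : ∀ i, Measurable (φ i)) {μ : Measure F}
    (hlaw : ∀ i, P.map (fun ω ↦ φ i (X ω)) = μ) :
    P.map (fun ω ↦ φ (I ω) (X ω)) = μ := by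
  have hΦ : Measurable fun p : ι × E ↦ φ p.1 p.2 := measurable_from_prod_countable_right hφ
  have hpair : P.map (fun ω ↦ (I ω, X ω)) = (P.map I).prod (P.map X) :=
    (indepFun_iff_map_prod_eq_prod_map_map hI.aemeasurable hX.aemeasurable).1 hind
  ext s hs
  have hlaw_s : ∀ i, P.map X (φ i ⁻¹' s) = μ s := fun i ↦ by
    rw [← hlaw i, ← Measure.map_apply (hφ i) hs, Measure.map_map (hφ i) hX]; rfl
  change P.map ((fun p : ι × E ↦ φ p.1 p.2) ∘ fun ω ↦ (I ω, X ω)) s = μ s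
  rw [← Measure.map_map hΦ (hI.prodMk hX), hpair, Measure.map_apply hΦ hs,
    Measure.prod_apply (hΦ hs)]
  refine (lintegral_congr fun i ↦ hlaw_s i).trans ?_
  simp [Measure.map_apply hI MeasurableSet.univ]

lemma map_fst_eq_and_indepFun_of_map_prodMk_eq_prod {Ω α β : Type*} {mΩ : MeasurableSpace Ω}
    {P : Measure Ω} [MeasurableSpace α] [MeasurableSpace β] {X : Ω → α} {Y : Ω → β}
    {μ : Measure α} {ν : Measure β} [IsProbabilityMeasure μ] [IsProbabilityMeasure ν]
    (h : P.map (fun ω ↦ (X ω, Y ω)) = μ.prod ν) :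
    P.map X = μ ∧ IndepFun X Y P := by
  have hXY : HasLaw (fun ω ↦ (X ω, Y ω)) (μ.prod ν) P :=
    ⟨AEMeasurable.of_map_ne_zero (by rw [h]; exact IsProbabilityMeasure.ne_zero _), h⟩
  have := hXY.isProbabilityMeasure
  have hX : HasLaw X μ P := (measurePreserving_fst (μ := μ) (ν := ν)).hasLaw.comp hXY
  have hY : HasLaw Y ν P := (measurePreserving_snd (μ := μ) (ν := ν)).hasLaw.comp hXY
  exact ⟨hX.map_eq, (indepFun_iff_hasLaw_prodMk_prod hX hY).2 hXY⟩

noncomputable def innovationCoeff {m : ℕ} (k : Fin m) : Fin (m + 1) → ℝ :=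
  Fin.snoc (fun i ↦ 1 / m - if i = k then 1 else 0) 1

def sumCoeff (m : ℕ) : Fin (m + 1) → ℝ :=
  Fin.snoc (fun _ ↦ 1) 0

lemma sum_innovationCoeff_mul {m : ℕ} (k : Fin m) (x : Fin (m + 1) → ℝ) :
    ∑ j, innovationCoeff k j * x j =
      ((∑ i : Fin m, x i.castSucc) - x k.castSucc + x (Fin.last m)) -
        (1 - 1 / m) * ∑ i : Fin m, x i.castSucc := by
  simp only [innovationCoeff, Fin.sum_univ_castSucc, Fin.snoc_castSucc, Fin.snoc_last, sub_mul,
    ite_mul, one_mul, zero_mul, Finset.sum_sub_distrib, ← Finset.mul_sum, Finset.sum_ite_eq',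
    Finset.mem_univ, if_true]
  ring

lemma sum_sumCoeff_mul {m : ℕ} (x : Fin (m + 1) → ℝ) :
    ∑ j, sumCoeff m j * x j = ∑ i : Fin m, x i.castSucc := by
  simp [sumCoeff, Fin.sum_univ_castSucc]

lemma sum_innovationCoeff_sq {m : ℕ} (k : Fin m) :
    ∑ j, innovationCoeff k j ^ 2 = 2 - 1 / m := by
  have hm : (m : ℝ) ≠ 0 := by have := k.pos; positivity
  simp only [innovationCoeff, one_div, Fin.sum_univ_castSucc, Fin.snoc_castSucc, sub_sq, inv_pow,
    mul_ite, mul_one, mul_zero, ite_pow, one_pow, ne_eq, OfNat.ofNat_ne_zero, not_false_eq_true,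
    zero_pow, Finset.sum_add_distrib, Finset.sum_sub_distrib, Finset.sum_const, Finset.card_univ,
    Fintype.card_fin, nsmul_eq_mul, Finset.sum_ite_eq', Finset.mem_univ, if_true, Fin.snoc_last]
  field_simp
  ring

lemma sum_innovationCoeff_mul_sumCoeff {m : ℕ} (k : Fin m) :
    ∑ j, innovationCoeff k j * sumCoeff m j = 0 := by
  have hm : (m : ℝ) ≠ 0 := by have := k.pos; positivity
  simp [innovationCoeff, sumCoeff, Fin.sum_univ_castSucc, Finset.sum_sub_distrib, hm]

lemma sum_sumCoeff_sq (m : ℕ) : ∑ j, sumCoeff m j ^ 2 = m := by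
  simp [sumCoeff, Fin.sum_univ_castSucc]

theorem innovation_gaussian_and_indep_general (m : ℕ)
    {Ω : Type*} [MeasureSpace Ω] [IsProbabilityMeasure (ℙ : Measure Ω)]
    (Z : Fin m → Ω → ℝ) (Z' : Ω → ℝ) (I : Ω → Fin m)
    (hZmeas : ∀ i, Measurable (Z i)) (hZ'meas : Measurable Z') (hImeas : Measurable I)
    (hZ : ∀ i, Measure.map (Z i) ℙ = gaussianReal 0 1)
    (hZ' : Measure.map Z' ℙ = gaussianReal 0 1)
    (hindepZ : iIndepFun
      (fun j : Fin (m + 1) => if h : (j : ℕ) < m then Z ⟨j, h⟩ else Z') ℙ)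
    (hindepI : IndepFun I
      (fun ω (j : Fin (m + 1)) => if h : (j : ℕ) < m then Z ⟨j, h⟩ ω else Z' ω) ℙ) :
    Measure.map
        (fun ω => ((∑ i, Z i ω) - Z (I ω) ω + Z' ω) - (1 - 1 / (m : ℝ)) * ∑ i, Z i ω) ℙ =
        gaussianReal 0 (2 - (m : ℝ≥0)⁻¹) ∧
      IndepFun
        (fun ω => ((∑ i, Z i ω) - Z (I ω) ω + Z' ω) - (1 - 1 / (m : ℝ)) * ∑ i, Z i ω)
        (fun ω => ∑ i, Z i ω) ℙ := by
  -- definitionally the family of `hindepZ`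
  set ξ : Fin (m + 1) → Ω → ℝ := Fin.snoc Z Z'
  have hξmeas : ∀ j, Measurable (ξ j) := Fin.lastCases (by simpa [ξ]) (by simpa [ξ])
  have hξlaw : ∀ j, HasLaw (ξ j) (gaussianReal 0 1) ℙ := fun j ↦
    ⟨(hξmeas j).aemeasurable, Fin.lastCases (by simpa [ξ]) (by simpa [ξ]) j⟩
  have hvec : (fun ω (j : Fin (m + 1)) ↦ if h : (j : ℕ) < m then Z ⟨j, h⟩ ω else Z' ω) =
      fun ω j ↦ ξ j ω :=
    funext₂ fun ω j ↦ (apply_dite (fun f : Ω → ℝ ↦ f ω) _ _ _).symm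
  set φ : Fin m → (Fin (m + 1) → ℝ) → ℝ × ℝ := fun k x ↦
    (∑ j, innovationCoeff k j * x j, ∑ j, sumCoeff m j * x j)
  have hvar : ∀ k : Fin m, ((2 - (m : ℝ≥0)⁻¹ : ℝ≥0) : ℝ) = ∑ j, innovationCoeff k j ^ 2 :=
    fun k ↦ by
      have : (m : ℝ≥0)⁻¹ ≤ 2 := (inv_le_one_of_one_le₀ (by exact_mod_cast k.pos)).trans one_le_two
      simp [sum_innovationCoeff_sq, NNReal.coe_sub this]
  have hlaw_k : ∀ k, Measure.map (fun ω ↦ φ k (ξ · ω)) ℙ =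
      (gaussianReal 0 (2 - (m : ℝ≥0)⁻¹)).prod (gaussianReal 0 (m : ℝ≥0)) := fun k ↦
    map_prodMk_sum_mul_eq_prod_gaussianReal hξlaw hindepZ (sum_innovationCoeff_mul_sumCoeff k)
      (hvar k) (by simp [sum_sumCoeff_sq])
  refine map_fst_eq_and_indepFun_of_map_prodMk_eq_prod (ν := gaussianReal 0 (m : ℝ≥0)) ?_
  convert map_apply_index_eq_of_indepFun hImeas (measurable_pi_lambda _ hξmeas) (hvec ▸ hindepI)
    (fun k ↦ by fun_prop) hlaw_k using 2 with ω
  simp [φ, sum_innovationCoeff_mul, sum_sumCoeff_mul]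

/-- Let `Z_1, ..., Z_m, Z'` be independent standard Gaussian random variables and let `I` be
uniformly distributed on `{1, ..., m}`, independent of `(Z_1, ..., Z_m, Z')`.  Set
`Y_0 = Z_1 + ... + Z_m` and let `Y_1 = Y_0 - Z_I + Z'` be the sum after a random single
replacement.  Then the innovation `ε = Y_1 - (1 - 1/m) Y_0` is Gaussian with mean `0` and
variance `2 - 1/m`, and `ε` is independent of `Y_0`.

Here joint independence of `Z_1, ..., Z_m, Z'` is expressed via the family
`ZZ : Fin (m+1) → Ω → ℝ` whose first `m` coordinates are the `Z i` and whose last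
coordinate is `Z'`, and independence of `I` from `(Z_1, ..., Z_m, Z')` is expressed as
independence of `I` from the random vector `ω ↦ (ZZ j ω)_j`. -/
theorem innovation_gaussian_and_indep (m : ℕ) (hm : 1 ≤ m)
    {Ω : Type*} [MeasureSpace Ω] [IsProbabilityMeasure (ℙ : Measure Ω)]
    (Z : Fin m → Ω → ℝ) (Z' : Ω → ℝ) (I : Ω → Fin m)
    (hZmeas : ∀ i, Measurable (Z i)) (hZ'meas : Measurable Z') (hImeas : Measurable I)
    (hZ : ∀ i, Measure.map (Z i) ℙ = gaussianReal 0 1)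
    (hZ' : Measure.map Z' ℙ = gaussianReal 0 1)
    (hI : ∀ i, ℙ {ω | I ω = i} = 1 / m)
    (hindepZ : iIndepFun
      (fun j : Fin (m + 1) => if h : (j : ℕ) < m then Z ⟨j, h⟩ else Z') ℙ)
    (hindepI : IndepFun I
      (fun ω (j : Fin (m + 1)) => if h : (j : ℕ) < m then Z ⟨j, h⟩ ω else Z' ω) ℙ) :
    Measure.map
        (fun ω => ((∑ i, Z i ω) - Z (I ω) ω + Z' ω) - (1 - 1 / (m : ℝ)) * ∑ i, Z i ω) ℙ =
        gaussianReal 0 (2 - (m : ℝ≥0)⁻¹) ∧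
      IndepFun
        (fun ω => ((∑ i, Z i ω) - Z (I ω) ω + Z' ω) - (1 - 1 / (m : ℝ)) * ∑ i, Z i ω)
        (fun ω => ∑ i, Z i ω) ℙ :=
  innovation_gaussian_and_indep_general m Z Z' I hZmeas hZ'meas hImeas hZ hZ' hindepZ hindepI
end
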